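/- arXiv:1410.4944 — 4 statements merged into one kernel-verified Lean document; each statement's English description precedes it below -/
import Mathlib

section
/- In the directed half-plane lattice first-passage percolation with i.i.d. nonnegative edge weights with non-atomic distribution and finite mean 1: for fixed even M, let m_k^{(M)} be the minimum over all directed top-to-bottom paths σ of length k inside the width-M directed cylinder C^l_{M,k} of the total weight λ(σ) = Σ_{e∈σ} ω(e). Then almost surely lim_{k→∞} m_k^{(M)}/k = 1. -/
/-!
Weights are nonnegative, so a path in the cylinder weighs at least the sum of its right steps.
Such a path runs along the diagonals `x - y = c`, `|c| ≤ M`, moving from `c` to `c - 2` at each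
left step, so it makes at most `M` left steps. Comparing its right-step weight telescopically
with the diagonal partial sums `S c n`, each left step costs at most
`1 + 2 max_{|c| ≤ M, n ≤ k} |S c n - n|`, which is `o(k)` almost surely by the strong law of
large numbers on each of the finitely many diagonals. The diagonal `x = y` itself is an
admissible path and gives the matching upper bound.
-/

open MeasureTheory ProbabilityTheory Filter

/-- Edges of the directed half-plane lattice `Ĥ`, indexed by their lower
endpoint `v` together with a Boolean which is `true` when the upper endpoint is
`v + (1,1)` and `false` when it is `v + (-1,1)`; the edge points downwards. -/
abbrev DirHPEdge := (ℤ × ℤ) × Bool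

/-- Total weight of the directed path which visits the vertex `(p j, j)` on
level `j` for `0 ≤ j ≤ k`, descending from level `k` to level `0`. -/
def dirWt (W : DirHPEdge → ℝ) (p : ℕ → ℤ) (k : ℕ) : ℝ :=
  ∑ j ∈ Finset.range k, W ((p j, (j : ℤ)), decide (p (j + 1) = p j + 1))

/-- The minimal weight `m_k^{(M)}` over all directed top-to-bottom paths of
length `k` inside the width-`M` cylinder `C^l_{M,k}` (vertices `(2i+j, j)`,
`-M ≤ 2i ≤ M`, `0 ≤ j ≤ k`). -/
noncomputable def cylMin (W : DirHPEdge → ℝ) (M k : ℕ) : ℝ :=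
  sInf {r : ℝ | ∃ p : ℕ → ℤ, Even (p 0) ∧
    (∀ j ≤ k, -(M : ℤ) ≤ p j - (j : ℤ) ∧ p j - (j : ℤ) ≤ (M : ℤ)) ∧
    (∀ j < k, p (j + 1) = p j + 1 ∨ p (j + 1) = p j - 1) ∧
    r = dirWt W p k}

open Finset

lemma eventually_forall_abs_sub_le {a : ℕ → ℝ} {L : ℝ}
    (ha : Tendsto (fun n => a n / n) atTop (nhds L)) {ε : ℝ} (hε : 0 < ε) :
    ∀ᶠ k in atTop, ∀ n ≤ k, |a n - n * L| ≤ ε * k := by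
  obtain ⟨N, hN⟩ := eventually_atTop.1
    ((ha.eventually (Metric.closedBall_mem_nhds L hε)).and (eventually_gt_atTop 0))
  set C := ∑ n ∈ range N, |a n - n * L|
  filter_upwards [eventually_ge_atTop ⌈C / ε⌉₊] with k hkC n hnk
  rcases lt_or_ge n N with hn | hn
  · calc |a n - n * L| ≤ C :=
          single_le_sum (f := fun i => |a i - i * L|) (fun i _ => abs_nonneg _) (mem_range.2 hn)
      _ ≤ ε * k := by
        rw [← div_le_iff₀' hε]
        exact (Nat.le_ceil _).trans (by exact_mod_cast hkC)
  · obtain ⟨hclose, hpos⟩ := hN n hn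
    have hpos : (0 : ℝ) < n := by exact_mod_cast hpos
    rw [Real.dist_eq] at hclose
    calc |a n - n * L| = n * |a n / n - L| := by
          rw [← abs_of_pos hpos, ← abs_mul, abs_of_pos hpos, mul_sub, mul_div_cancel₀ _ hpos.ne']
      _ ≤ n * ε := by gcongr
      _ ≤ ε * k := by rw [mul_comm]; gcongr

section Probabilistic

variable {Ω ι : Type*} [MeasureSpace Ω] {μ : Measure ℝ} {W : ι → Ω → ℝ}

lemma ae_tendsto_sum_div_of_injective (hmeas : ∀ i, Measurable (W i))
    (hindep : iIndepFun W ℙ) (hdist : ∀ i, Measure.map (W i) ℙ = μ)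
    (hint : Integrable id μ) {e : ℕ → ι} (he : Function.Injective e) :
    ∀ᵐ ω ∂ℙ, Tendsto (fun n : ℕ => (∑ j ∈ range n, W (e j) ω) / n) atTop
      (nhds (∫ x, x ∂μ)) := by
  have hident : ∀ i, IdentDistrib (W i) id ℙ μ := fun i =>
    ⟨(hmeas i).aemeasurable, aemeasurable_id, by rw [hdist, Measure.map_id]⟩
  have hlaw := strong_law_ae_real (μ := ℙ) (fun j => W (e j)) ((hident _).integrable_iff.2 hint)
    (fun i j hij => hindep.indepFun (he.ne hij))
    (fun j => (hident (e j)).trans (hident (e 0)).symm)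
  rwa [(hident (e 0)).integral_eq] at hlaw

lemma ae_forall_nonneg [Countable ι] (hmeas : ∀ i, Measurable (W i))
    (hdist : ∀ i, Measure.map (W i) ℙ = μ) (hsupp : μ (Set.Iio 0) = 0) :
    ∀ᵐ ω ∂ℙ, ∀ i, 0 ≤ W i ω := by
  refine ae_all_iff.2 fun i => ?_
  have hneg : ℙ (W i ⁻¹' Set.Iio 0) = 0 := by
    rw [← Measure.map_apply (hmeas i) measurableSet_Iio, hdist i, hsupp]
  filter_upwards [measure_eq_zero_iff_ae_notMem.1 hneg] with ω hω
  simpa using hω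

end Probabilistic

/-- Weight of the first `n` edges of the straight path down the diagonal `x - y = c`. -/
def diagWt (W : DirHPEdge → ℝ) (c : ℤ) (n : ℕ) : ℝ :=
  ∑ j ∈ range n, W ((c + j, (j : ℤ)), true)

section Deterministic

variable {W : DirHPEdge → ℝ} {p : ℕ → ℤ} {k M : ℕ} {δ : ℝ}

lemma diagWt_le_dirWt_add (hW : ∀ e, 0 ≤ W e)
    (hbd : ∀ j ≤ k, -(M : ℤ) ≤ p j - (j : ℤ) ∧ p j - (j : ℤ) ≤ (M : ℤ))
    (hstep : ∀ j < k, p (j + 1) = p j + 1 ∨ p (j + 1) = p j - 1)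
    (hδ : ∀ c : ℤ, -(M : ℤ) ≤ c → c ≤ M → ∀ n ≤ k, |diagWt W c n - n| ≤ δ) :
    ∀ i ≤ k, diagWt W (p i - i) i ≤ dirWt W p i + (p 0 - p i + i) * (δ + 1 / 2) := by
  intro i
  induction i with
  | zero => intro _; simp [diagWt, dirWt]
  | succ i ih =>
    intro hi
    have ih := ih (by omega)
    rw [dirWt, sum_range_succ, ← dirWt]
    rcases hstep i (by omega) with hright | hleft
    · have hd : p (i + 1) - ((i + 1 : ℕ) : ℤ) = p i - i := by push_cast; omega
      rw [hd, diagWt, sum_range_succ, ← diagWt, hright, sub_add_cancel, decide_eq_true rfl]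
      push_cast
      linarith
    · obtain ⟨hlo, hhi⟩ := hbd (i + 1) hi
      have hnext := (abs_le.1 (hδ _ hlo hhi (i + 1) hi)).2
      have hcur := (abs_le.1 (hδ (p i - i) (hbd i (by omega)).1 (hbd i (by omega)).2 i
        (by omega))).1
      rw [hleft] at hnext ⊢
      have hWi := hW ((p i, (i : ℤ)), decide (p i - 1 = p i + 1))
      push_cast at hnext hcur ⊢
      linarith

lemma sub_le_dirWt (hW : ∀ e, 0 ≤ W e)
    (hbd : ∀ j ≤ k, -(M : ℤ) ≤ p j - (j : ℤ) ∧ p j - (j : ℤ) ≤ (M : ℤ))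
    (hstep : ∀ j < k, p (j + 1) = p j + 1 ∨ p (j + 1) = p j - 1)
    (hδ : ∀ c : ℤ, -(M : ℤ) ≤ c → c ≤ M → ∀ n ≤ k, |diagWt W c n - n| ≤ δ) :
    k - M - (2 * M + 1) * δ ≤ dirWt W p k := by
  have hinv := diagWt_le_dirWt_add hW hbd hstep hδ k le_rfl
  obtain ⟨hlo, hhi⟩ := hbd k le_rfl
  have hend := (abs_le.1 (hδ _ hlo hhi k le_rfl)).1
  have hδ0 : 0 ≤ δ := (abs_nonneg _).trans (hδ 0 (by omega) (by omega) 0 (Nat.zero_le k))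
  -- the path drifts off the diagonal by `2` at each left step, so it takes at most `M` of them
  have hdrift : ((p 0 - p k + k : ℤ) : ℝ) ≤ 2 * M := by
    have := (hbd 0 (Nat.zero_le k)).2
    push_cast at this
    exact_mod_cast (by omega : p 0 - p k + k ≤ 2 * (M : ℤ))
  push_cast at hdrift
  nlinarith

lemma dirWt_natCast (k : ℕ) : dirWt W (fun j => (j : ℤ)) k = diagWt W 0 k := by
  refine sum_congr rfl fun j _ => ?_
  simp

lemma le_cylMin {b : ℝ} (hb : ∀ p : ℕ → ℤ,
      (∀ j ≤ k, -(M : ℤ) ≤ p j - (j : ℤ) ∧ p j - (j : ℤ) ≤ (M : ℤ)) →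
      (∀ j < k, p (j + 1) = p j + 1 ∨ p (j + 1) = p j - 1) → b ≤ dirWt W p k) :
    b ≤ cylMin W M k := by
  refine le_csInf
    ⟨_, fun j => (j : ℤ), by simp, fun j _ => by simp, fun j _ => by simp, rfl⟩ ?_
  rintro r ⟨p, -, hbd, hstep, rfl⟩
  exact hb p hbd hstep

lemma cylMin_le_diagWt_zero (hW : ∀ e, 0 ≤ W e) : cylMin W M k ≤ diagWt W 0 k := by
  rw [← dirWt_natCast]
  refine csInf_le ⟨0, ?_⟩
    ⟨fun j => (j : ℤ), by simp, fun j _ => by simp, fun j _ => by simp, rfl⟩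
  rintro r ⟨p, -, -, -, rfl⟩
  exact sum_nonneg fun j _ => hW _

lemma sub_le_cylMin (hW : ∀ e, 0 ≤ W e)
    (hδ : ∀ c : ℤ, -(M : ℤ) ≤ c → c ≤ M → ∀ n ≤ k, |diagWt W c n - n| ≤ δ) :
    k - M - (2 * M + 1) * δ ≤ cylMin W M k :=
  le_cylMin fun _ hbd hstep => sub_le_dirWt hW hbd hstep hδ

end Deterministic

lemma eventually_mul_le_cylMin {W : DirHPEdge → ℝ} (hW : ∀ e, 0 ≤ W e)
    (hdiag : ∀ c, Tendsto (fun n => diagWt W c n / n) atTop (nhds 1)) (M : ℕ) {ε : ℝ}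
    (hε : 0 < ε) : ∀ᶠ k : ℕ in atTop, (1 - ε) * k ≤ cylMin W M k := by
  have hε' : 0 < ε / (2 * (2 * M + 1)) := by positivity
  have hunif : ∀ᶠ k : ℕ in atTop, ∀ c ∈ Icc (-(M : ℤ)) M, ∀ n ≤ k,
      |diagWt W c n - n| ≤ ε / (2 * (2 * M + 1)) * k :=
    (eventually_all_finset _).2 fun c _ => by
      simpa using eventually_forall_abs_sub_le (hdiag c) hε'
  filter_upwards [hunif, eventually_ge_atTop ⌈2 * M / ε⌉₊] with k hk hkM
  have hbound := sub_le_cylMin hW fun c hlo hhi => hk c (mem_Icc.2 ⟨hlo, hhi⟩)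
  have hM : 2 * M ≤ ε * k := by
    rw [← div_le_iff₀' hε]
    exact (Nat.le_ceil _).trans (by exact_mod_cast hkM)
  have : (2 * M + 1) * (ε / (2 * (2 * M + 1)) * k) = ε * k / 2 := by field_simp
  linarith

theorem tendsto_cylMin_div {W : DirHPEdge → ℝ} (hW : ∀ e, 0 ≤ W e)
    (hdiag : ∀ c, Tendsto (fun n => diagWt W c n / n) atTop (nhds 1)) (M : ℕ) :
    Tendsto (fun k : ℕ => cylMin W M k / k) atTop (nhds 1) := by
  refine tendsto_order.2 ⟨fun a ha => ?_, fun a ha => ?_⟩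
  · filter_upwards [eventually_mul_le_cylMin hW hdiag M (half_pos (sub_pos.2 ha)),
      eventually_gt_atTop 0] with k hk hk0
    have hk0 : (0 : ℝ) < k := by exact_mod_cast hk0
    rw [lt_div_iff₀ hk0]
    nlinarith
  · filter_upwards [(hdiag 0).eventually (eventually_lt_nhds ha)] with k hk
    exact lt_of_le_of_lt (div_le_div_of_nonneg_right (cylMin_le_diagWt_zero hW)
      (Nat.cast_nonneg k)) hk

lemma ae_tendsto_diagWt_div {Ω : Type*} [MeasureSpace Ω] {μ : Measure ℝ}
    {W : DirHPEdge → Ω → ℝ} (hmeas : ∀ e, Measurable (W e)) (hindep : iIndepFun W ℙ)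
    (hdist : ∀ e, Measure.map (W e) ℙ = μ) (hmean : ∫ t, t ∂μ = 1) :
    ∀ᵐ ω ∂ℙ, ∀ c, Tendsto (fun n => diagWt (fun e => W e ω) c n / n) atTop (nhds 1) := by
  have hint : Integrable id μ := Integrable.of_integral_ne_zero (by simp [hmean])
  refine ae_all_iff.2 fun c => ?_
  have hinj : Function.Injective fun j : ℕ => (((c + j : ℤ), (j : ℤ)), true) :=
    fun i j hij => by simpa using congrArg (fun e : DirHPEdge => e.1.2) hij
  simpa [diagWt, hmean] using ae_tendsto_sum_div_of_injective hmeas hindep hdist hint hinj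

theorem cylinder_passage_time_limit_general
    {Ω : Type*} [MeasureSpace Ω]
    (μ : Measure ℝ)
    (hsupp : μ (Set.Iio 0) = 0)
    (hmean : ∫ t, t ∂μ = 1)
    (W : DirHPEdge → Ω → ℝ) (hmeas : ∀ e, Measurable (W e))
    (hindep : iIndepFun W ℙ)
    (hdist : ∀ e, Measure.map (W e) ℙ = μ)
    (M : ℕ) :
    ∀ᵐ ω ∂ℙ, Tendsto (fun k : ℕ => cylMin (fun e => W e ω) M k / k)
      atTop (nhds 1) := by
  filter_upwards [ae_forall_nonneg hmeas hdist hsupp,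
    ae_tendsto_diagWt_div hmeas hindep hdist hmean] with ω hnonneg hdiag
  exact tendsto_cylMin_div hnonneg hdiag M

/-- Lemma 3.6: in directed half-plane first-passage percolation with i.i.d.
nonnegative non-atomic edge weights of mean `1`, for every fixed even width `M`
the minimal cylinder passage time satisfies `m_k^{(M)} / k → 1` almost surely. -/
theorem cylinder_passage_time_limit
    {Ω : Type*} [MeasureSpace Ω] [IsProbabilityMeasure (ℙ : Measure Ω)]
    (μ : Measure ℝ) [IsProbabilityMeasure μ]
    (hatom : ∀ a : ℝ, μ {a} = 0)
    (hsupp : μ (Set.Iio 0) = 0)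
    (hmean : ∫ t, t ∂μ = 1)
    (W : DirHPEdge → Ω → ℝ) (hmeas : ∀ e, Measurable (W e))
    (hindep : iIndepFun W ℙ)
    (hdist : ∀ e, Measure.map (W e) ℙ = μ)
    (M : ℕ) (hM : Even M) (hMpos : 0 < M) :
    ∀ᵐ ω ∂ℙ, Tendsto (fun k : ℕ => cylMin (fun e => W e ω) M k / k)
      atTop (nhds 1) :=
  cylinder_passage_time_limit_general μ hsupp hmean W hmeas hindep hdist M
end

section
/- In the directed model on Ĝ = G × Z₊ (G a Cayley graph), the sequence m_n = E[d̂_ω((x,n), G)] of expected directed passage times from level n to the base is strictly increasing in n along any increment k for which a directed path from (x, n+k) to (x, n) exists; moreover, for every ε > 0 and every such k there exists K > 0, independent of n and x, with P[d̂_ω((x, n+k), G) − d̂_ω((x,n), G) < −K] ≤ ε. -/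
open MeasureTheory ProbabilityTheory
open scoped ENNReal

/-- Directed adjacency on `G × ℕ`: an edge points from `(y, n+1)` down to
`(x, n)` whenever `x` and `y` are neighbours in the Cayley graph of `(G, S)`. -/
def adjD {G : Type*} [Group G] (S : Finset G) (u v : G × ℕ) : Prop :=
  u.2 = v.2 + 1 ∧ u.1⁻¹ * v.1 ∈ S

/-- Weight of a directed path with `n` steps. -/
def wtD {G : Type*} (W : (G × ℕ) × (G × ℕ) → ℝ) (p : ℕ → G × ℕ) (n : ℕ) : ℝ :=
  ∑ j ∈ Finset.range n, W (p j, p (j + 1))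

/-- Directed passage time `d̂_ω(u, G)` from `u` to the base level `G × {0}`. -/
noncomputable def dD {G : Type*} [Group G] (S : Finset G)
    (W : (G × ℕ) × (G × ℕ) → ℝ) (u : G × ℕ) : ℝ :=
  sInf {r : ℝ | ∃ (n : ℕ) (p : ℕ → G × ℕ), p 0 = u ∧ (p n).2 = 0 ∧
    (∀ j < n, adjD S (p j) (p (j + 1))) ∧ r = wtD W p n}

/-!
Every directed path from level `n` has exactly `n` steps, so `d̂` is a finite minimum and obeys
the recursion `d̂(x, n + 1) = min_{s ∈ S} (ω((x, n + 1), (xs, n)) + d̂(xs, n))`.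

Split a path from `(x, n + k)` at level `k`: the upper part is a path from `(x, n)` for the
weights shifted up by `k` levels, the lower part a path of length `k > 0` from a point of the
finite set `x • Sⁿ`. As the weights are i.i.d., the shifted passage time again has mean `m_n`,
while the lower part costs at least the a.s. positive minimum `τ` of the passage times from
`(x • Sⁿ) × {k}`; hence `m_{n+k} ≥ m_n + E τ > m_n`.

Following the closed walk of length `k` gives `d̂(x, n + k) ≤ λ + d̂(x, n)` with `E λ = k m`,
where `m` is the mean of `μ`. Markov's inequality for `λ + d̂(x, n) - d̂(x, n + k) ≥ 0`, whose
mean is at most `k m` by the first part, bounds the probability of a drop below `-K` by `k m / K`.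
-/

open scoped Pointwise

theorem Finset.measurable_inf' {ι δ α : Type*} [MeasurableSpace δ] [MeasurableSpace α]
    [SemilatticeInf α] [MeasurableInf₂ α] {s : Finset ι} (hs : s.Nonempty) {f : ι → δ → α}
    (hf : ∀ i ∈ s, Measurable (f i)) : Measurable (s.inf' hs f) :=
  Finset.inf'_induction hs _ (fun _ hf _ hg => hf.inf hg) hf

theorem Finset.integrable_inf' {ι α β : Type*} [MeasurableSpace α] {μ : Measure α}
    [NormedAddCommGroup β] [Lattice β] [HasSolidNorm β] [IsOrderedAddMonoid β]
    {s : Finset ι} (hs : s.Nonempty) {f : ι → α → β} (hf : ∀ i ∈ s, Integrable (f i) μ) :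
    Integrable (s.inf' hs f) μ :=
  Finset.inf'_induction hs f (p := (Integrable · μ)) (fun _ hf _ hg => hf.inf hg) hf

theorem ProbabilityTheory.iIndepFun.integral_comp_precomp {ι Ω β : Type*} [MeasurableSpace Ω]
    [MeasurableSpace β] {P : Measure Ω} {X : ι → Ω → β} (hX : ∀ i, Measurable (X i))
    (hind : iIndepFun X P)
    {σ : ι → ι} (hσ : σ.Injective) (hident : ∀ i, P.map (X (σ i)) = P.map (X i))
    {Φ : (ι → β) → ℝ} (hΦ : Measurable Φ) :
    ∫ ω, Φ (fun i => X (σ i) ω) ∂P = ∫ ω, Φ (fun i => X i ω) ∂P := by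
  have hlaw : P.map (fun ω i => X (σ i) ω) = P.map (fun ω i => X i ω) := by
    rw [(hind.precomp hσ).map_fun_eq_infinitePi_map fun i => hX _,
      hind.map_fun_eq_infinitePi_map hX]
    simp only [hident]
  rw [← integral_map (measurable_pi_lambda _ fun i => hX _).aemeasurable hΦ.aestronglyMeasurable,
    hlaw, integral_map (measurable_pi_lambda _ hX).aemeasurable hΦ.aestronglyMeasurable]

theorem measure_sub_lt_neg_le {Ω : Type*} [MeasurableSpace Ω] {P : Measure Ω} [IsFiniteMeasure P]
    {X Y Λ : Ω → ℝ} (hX : Integrable X P) (hY : Integrable Y P) (hΛ : Integrable Λ P)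
    (hΛ_nonneg : ∀ᵐ ω ∂P, 0 ≤ Λ ω) (hle : ∀ᵐ ω ∂P, X ω ≤ Λ ω + Y ω)
    (hmono : ∫ ω, Y ω ∂P ≤ ∫ ω, X ω ∂P) {K : ℝ} (hK : 0 < K) :
    P {ω | X ω - Y ω < -K} ≤ ENNReal.ofReal ((∫ ω, Λ ω ∂P) / K) := by
  set g : Ω → ℝ := fun ω => Λ ω + Y ω - X ω
  have hg_mean : ∫ ω, g ω ∂P ≤ ∫ ω, Λ ω ∂P := by
    simp only [g]
    rw [integral_sub (f := fun ω => Λ ω + Y ω) (hΛ.add hY) hX, integral_add hΛ hY]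
    linarith
  have hmarkov := mul_meas_ge_le_integral_of_nonneg
    (hle.mono fun ω h => show 0 ≤ g ω by simp only [g]; linarith) ((hΛ.add hY).sub hX) K
  have hevent : {ω | X ω - Y ω < -K} ≤ᵐ[P] {ω | K ≤ g ω} :=
    hΛ_nonneg.mono fun ω hΛω hω => show K ≤ g ω by
      simp only [g]; linarith [show X ω - Y ω < -K from hω]
  calc P {ω | X ω - Y ω < -K} ≤ P {ω | K ≤ g ω} := measure_mono_ae hevent
    _ = ENNReal.ofReal (P.real {ω | K ≤ g ω}) := (ofReal_measureReal (measure_ne_top _ _)).symm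
    _ ≤ ENNReal.ofReal ((∫ ω, Λ ω ∂P) / K) :=
      ENNReal.ofReal_le_ofReal (by rw [le_div_iff₀ hK]; linarith)

section PathWeights

variable {G : Type*} [Group G] {S : Finset G} {W : (G × ℕ) × (G × ℕ) → ℝ}

def pathWeights (S : Finset G) (W : (G × ℕ) × (G × ℕ) → ℝ) (u : G × ℕ) : Set ℝ :=
  {r : ℝ | ∃ (n : ℕ) (p : ℕ → G × ℕ), p 0 = u ∧ (p n).2 = 0 ∧
    (∀ j < n, adjD S (p j) (p (j + 1))) ∧ r = wtD W p n}

theorem dD_eq_sInf_pathWeights (u : G × ℕ) : dD S W u = sInf (pathWeights S W u) := rfl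

theorem adjD_mul {s : G} (hs : s ∈ S) (x : G) (n : ℕ) : adjD S (x, n + 1) (x * s, n) := by
  simpa [adjD] using hs

theorem pathWeights_level_zero (x : G) : pathWeights S W (x, 0) = {0} := by
  ext r
  refine ⟨?_, fun hr => ⟨0, fun _ => (x, 0), rfl, rfl, by simp, by simpa [wtD] using hr⟩⟩
  rintro ⟨_ | n, p, hp0, -, hadj, rfl⟩
  · simp [wtD]
  · have := (hadj 0 n.succ_pos).1
    simp [hp0] at this

theorem add_mem_pathWeights {u v : G × ℕ} (huv : adjD S u v) {r : ℝ}
    (hr : r ∈ pathWeights S W v) : W (u, v) + r ∈ pathWeights S W u := by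
  obtain ⟨n, p, hp0, hpn, hadj, rfl⟩ := hr
  refine ⟨n + 1, fun | 0 => u | j + 1 => p j, rfl, hpn, ?_, ?_⟩
  · rintro (_ | j) hj
    · simpa [hp0] using huv
    · exact hadj j (by omega)
  · simp [wtD, Finset.sum_range_succ', hp0, add_comm]

theorem exists_of_mem_pathWeights_succ {x : G} {n : ℕ} {r : ℝ}
    (hr : r ∈ pathWeights S W (x, n + 1)) :
    ∃ s ∈ S, ∃ r' ∈ pathWeights S W (x * s, n), r = W ((x, n + 1), (x * s, n)) + r' := by
  obtain ⟨_ | m, p, hp0, hpm, hadj, rfl⟩ := hr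
  · simp [hp0] at hpm
  obtain ⟨hlevel, hstep⟩ := hadj 0 m.succ_pos
  have hp1 : p 1 = (x * (x⁻¹ * (p 1).1), n) := by
    ext
    · simp
    · simp only [hp0, zero_add] at hlevel
      exact (Nat.add_right_cancel hlevel).symm
  refine ⟨x⁻¹ * (p 1).1, by simpa [hp0] using hstep, wtD W (fun j => p (j + 1)) m,
    ⟨m, fun j => p (j + 1), hp1, hpm, fun j hj => hadj (j + 1) (by omega), rfl⟩, ?_⟩
  rw [wtD, Finset.sum_range_succ', ← hp1, ← hp0, add_comm]
  rfl

theorem isLeast_pathWeights_succ (hS : S.Nonempty) {x : G} {n : ℕ}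
    (h : ∀ y, IsLeast (pathWeights S W (y, n)) (dD S W (y, n))) :
    IsLeast (pathWeights S W (x, n + 1))
      (S.inf' hS fun s => W ((x, n + 1), (x * s, n)) + dD S W (x * s, n)) := by
  constructor
  · obtain ⟨s, hs, hmin⟩ := S.exists_mem_eq_inf' hS
      fun s => W ((x, n + 1), (x * s, n)) + dD S W (x * s, n)
    rw [hmin]
    exact add_mem_pathWeights (adjD_mul hs x n) (h _).1
  · intro r hr
    obtain ⟨s, hs, r', hr', rfl⟩ := exists_of_mem_pathWeights_succ hr
    exact (S.inf'_le _ hs).trans (add_le_add_right ((h _).2 hr') _)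

theorem isLeast_pathWeights (hS : S.Nonempty) (u : G × ℕ) :
    IsLeast (pathWeights S W u) (dD S W u) := by
  obtain ⟨x, n⟩ := u
  induction n generalizing x with
  | zero => simp [dD_eq_sInf_pathWeights, pathWeights_level_zero, isLeast_singleton]
  | succ n ih =>
    have h := isLeast_pathWeights_succ hS (x := x) ih
    rwa [dD_eq_sInf_pathWeights, h.csInf_eq]

theorem dD_level_zero (x : G) : dD S W (x, 0) = 0 := by
  rw [dD_eq_sInf_pathWeights, pathWeights_level_zero, csInf_singleton]

theorem dD_succ (hS : S.Nonempty) (x : G) (n : ℕ) :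
    dD S W (x, n + 1) = S.inf' hS fun s => W ((x, n + 1), (x * s, n)) + dD S W (x * s, n) :=
  ((isLeast_pathWeights_succ hS fun y => isLeast_pathWeights hS (y, n)).unique
    (isLeast_pathWeights hS _)).symm

theorem dD_le_add_of_adjD (hS : S.Nonempty) {u v : G × ℕ} (huv : adjD S u v) :
    dD S W u ≤ W (u, v) + dD S W v :=
  (isLeast_pathWeights hS u).2 (add_mem_pathWeights huv (isLeast_pathWeights hS v).1)

theorem dD_le_wtD_add (hS : S.Nonempty) {p : ℕ → G × ℕ} {m : ℕ}
    (hp : ∀ j < m, adjD S (p j) (p (j + 1))) : dD S W (p 0) ≤ wtD W p m + dD S W (p m) := by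
  induction m with
  | zero => simp [wtD]
  | succ m ih =>
    calc dD S W (p 0) ≤ wtD W p m + dD S W (p m) := ih fun j hj => hp j (by omega)
      _ ≤ wtD W p m + (W (p m, p (m + 1)) + dD S W (p (m + 1))) := by
        gcongr; exact dD_le_add_of_adjD hS (hp m m.lt_succ_self)
      _ = wtD W p (m + 1) + dD S W (p (m + 1)) := by rw [wtD, wtD, Finset.sum_range_succ, add_assoc]

theorem dD_congr {W' : (G × ℕ) × (G × ℕ) → ℝ} (hW : ∀ u v, adjD S u v → W (u, v) = W' (u, v))
    (u : G × ℕ) : dD S W u = dD S W' u := by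
  simp only [dD]
  congr 1
  ext r
  refine exists_congr fun n => exists_congr fun p => and_congr_right fun _ =>
    and_congr_right fun _ => and_congr_right fun hadj => ?_
  rw [wtD, wtD, Finset.sum_congr rfl fun j hj => hW _ _ (hadj j (Finset.mem_range.1 hj))]

theorem dD_nonneg (hW : ∀ u v, adjD S u v → 0 ≤ W (u, v)) (u : G × ℕ) : 0 ≤ dD S W u := by
  refine Real.sInf_nonneg ?_
  rintro r ⟨n, p, -, -, hadj, rfl⟩
  exact Finset.sum_nonneg fun j hj => hW _ _ (hadj j (Finset.mem_range.1 hj))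

theorem dD_pos (hS : S.Nonempty) (hW : ∀ u v, adjD S u v → 0 < W (u, v)) (x : G) {n : ℕ}
    (hn : 0 < n) : 0 < dD S W (x, n) := by
  obtain ⟨n, rfl⟩ := Nat.exists_eq_succ_of_ne_zero hn.ne'
  rw [dD_succ hS]
  exact (Finset.lt_inf'_iff _).2 fun s hs => add_pos_of_pos_of_nonneg
    (hW _ _ (adjD_mul hs x n)) (dD_nonneg (fun u v huv => (hW u v huv).le) _)

theorem adjD.shift {u v : G × ℕ} (h : adjD S u v) (k : ℕ) :
    adjD S (u.1, k + u.2) (v.1, k + v.2) :=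
  ⟨by simp [h.1, add_assoc], h.2⟩

def shiftWeights (k : ℕ) (W : (G × ℕ) × (G × ℕ) → ℝ) : (G × ℕ) × (G × ℕ) → ℝ :=
  fun e => W ((e.1.1, k + e.1.2), (e.2.1, k + e.2.2))

theorem smul_pow_subset_smul_pow_succ [DecidableEq G] {s : G} (hs : s ∈ S) (x : G) (n : ℕ) :
    (x * s) • S ^ n ⊆ x • S ^ (n + 1) := by
  rw [pow_succ', mul_smul]
  exact Finset.smul_finset_subset_smul_finset (Finset.smul_finset_subset_mul hs)

theorem dD_shiftWeights_add_inf'_le [DecidableEq G] (hS : S.Nonempty) (k : ℕ) (x : G) (n : ℕ) :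
    dD S (shiftWeights k W) (x, n) + (x • S ^ n).inf' hS.pow.smul_finset (fun y => dD S W (y, k))
      ≤ dD S W (x, k + n) := by
  induction n generalizing x with
  | zero =>
    have hx : x ∈ x • S ^ 0 := by
      simpa using Finset.smul_mem_smul_finset (a := x) (Finset.one_mem_one (α := G))
    rw [dD_level_zero, zero_add, add_zero]
    exact Finset.inf'_le _ hx
  | succ n ih =>
    rw [← add_assoc, dD_succ hS, dD_succ hS]
    refine Finset.le_inf' _ _ fun s hs => ?_
    have hsub := Finset.inf'_mono (fun y => dD S W (y, k))
      (smul_pow_subset_smul_pow_succ hs x n) hS.pow.smul_finset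
    have := Finset.inf'_le (fun s => shiftWeights k W ((x, n + 1), (x * s, n)) +
      dD S (shiftWeights k W) (x * s, n)) hs
    have hedge : shiftWeights k W ((x, n + 1), (x * s, n)) =
        W ((x, k + n + 1), (x * s, k + n)) := rfl
    linarith [ih (x * s)]

theorem measurable_dD (hS : S.Nonempty) (u : G × ℕ) :
    Measurable fun W : (G × ℕ) × (G × ℕ) → ℝ => dD S W u := by
  obtain ⟨x, n⟩ := u
  induction n generalizing x with
  | zero => simp only [dD_level_zero, measurable_const]
  | succ n ih =>
    have : (fun W => dD S W (x, n + 1)) =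
        S.inf' hS fun s W => W ((x, n + 1), (x * s, n)) + dD S W (x * s, n) :=
      funext fun W => by rw [dD_succ hS, Finset.inf'_apply]
    rw [this]
    exact Finset.measurable_inf' hS fun s _ => (measurable_pi_apply _).add (ih _)

theorem integrable_dD (hS : S.Nonempty) {Ω : Type*} [MeasurableSpace Ω] {P : Measure Ω}
    {X : (G × ℕ) × (G × ℕ) → Ω → ℝ} (hX : ∀ u v, adjD S u v → Integrable (X (u, v)) P)
    (u : G × ℕ) : Integrable (fun ω => dD S (fun e => X e ω) u) P := by
  obtain ⟨x, n⟩ := u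
  induction n generalizing x with
  | zero => simp only [dD_level_zero]; exact integrable_zero _ _ _
  | succ n ih =>
    have : (fun ω => dD S (fun e => X e ω) (x, n + 1)) =
        S.inf' hS fun s ω => X ((x, n + 1), (x * s, n)) ω + dD S (fun e => X e ω) (x * s, n) :=
      funext fun ω => by rw [dD_succ hS, Finset.inf'_apply]
    rw [this]
    exact Finset.integrable_inf' hS fun s hs => (hX _ _ (adjD_mul hs x n)).add (ih _)

end PathWeights

section Model

variable {G : Type*} [Group G] {S : Finset G} {Ω : Type*} [MeasureSpace Ω] {μ : Measure ℝ}
  {WD : (G × ℕ) × (G × ℕ) → Ω → ℝ}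

theorem integrable_weight (hWDmeas : ∀ e, Measurable (WD e))
    (hWDdist : ∀ e : {e : (G × ℕ) × (G × ℕ) // adjD S e.1 e.2}, Measure.map (WD e.val) ℙ = μ)
    (hmean : Integrable id μ) {u v : G × ℕ} (huv : adjD S u v) : Integrable (WD (u, v)) ℙ := by
  have h : Integrable id (Measure.map (WD (u, v)) ℙ) := (hWDdist ⟨(u, v), huv⟩).symm ▸ hmean
  exact (integrable_map_measure aestronglyMeasurable_id (hWDmeas _).aemeasurable).1 h

theorem integral_weight (hWDmeas : ∀ e, Measurable (WD e))
    (hWDdist : ∀ e : {e : (G × ℕ) × (G × ℕ) // adjD S e.1 e.2}, Measure.map (WD e.val) ℙ = μ)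
    {u v : G × ℕ} (huv : adjD S u v) : ∫ ω, WD (u, v) ω ∂ℙ = ∫ y, y ∂μ := by
  rw [← hWDdist ⟨(u, v), huv⟩]
  exact (integral_map (hWDmeas _).aemeasurable aestronglyMeasurable_id).symm

theorem ae_forall_weight_mem [Countable G] (hWDmeas : ∀ e, Measurable (WD e))
    (hWDdist : ∀ e : {e : (G × ℕ) × (G × ℕ) // adjD S e.1 e.2}, Measure.map (WD e.val) ℙ = μ)
    {s : Set ℝ} (hs : MeasurableSet s) (hμs : μ sᶜ = 0) :
    ∀ᵐ ω ∂ℙ, ∀ u v, adjD S u v → WD (u, v) ω ∈ s := by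
  have h : ∀ e : {e : (G × ℕ) × (G × ℕ) // adjD S e.1 e.2}, ∀ᵐ ω ∂ℙ, WD e.val ω ∈ s := by
    intro e
    rw [ae_iff]
    change ℙ (WD e.val ⁻¹' sᶜ) = 0
    rwa [← Measure.map_apply (hWDmeas _) hs.compl, hWDdist]
  filter_upwards [ae_all_iff.2 h] with ω hω u v huv using hω ⟨(u, v), huv⟩

theorem integral_dD_shiftWeights [IsProbabilityMeasure (ℙ : Measure Ω)] (hS : S.Nonempty)
    (hWDmeas : ∀ e, Measurable (WD e))
    (hWDindep : iIndepFun (fun e : {e : (G × ℕ) × (G × ℕ) // adjD S e.1 e.2} => WD e.val) ℙ)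
    (hWDdist : ∀ e : {e : (G × ℕ) × (G × ℕ) // adjD S e.1 e.2}, Measure.map (WD e.val) ℙ = μ)
    (k : ℕ) (u : G × ℕ) :
    ∫ ω, dD S (shiftWeights k fun e => WD e ω) u ∂ℙ = ∫ ω, dD S (fun e => WD e ω) u ∂ℙ := by
  classical
  let σ (e : {e : (G × ℕ) × (G × ℕ) // adjD S e.1 e.2}) :
      {e : (G × ℕ) × (G × ℕ) // adjD S e.1 e.2} :=
    ⟨((e.1.1.1, k + e.1.1.2), (e.1.2.1, k + e.1.2.2)), e.2.shift k⟩
  have hσ : σ.Injective := fun e e' h => by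
    simp only [σ, Subtype.mk.injEq, Prod.mk.injEq, add_right_inj] at h
    exact Subtype.ext (Prod.ext (Prod.ext h.1.1 h.1.2) (Prod.ext h.2.1 h.2.2))
  let Φ (v : {e : (G × ℕ) × (G × ℕ) // adjD S e.1 e.2} → ℝ) : ℝ :=
    dD S (fun e => if h : adjD S e.1 e.2 then v ⟨e, h⟩ else 0) u
  have hΦ : Measurable Φ := by
    refine (measurable_dD hS u).comp (measurable_pi_lambda _ fun e => ?_)
    by_cases h : adjD S e.1 e.2
    · simpa only [h, dif_pos] using measurable_pi_apply _
    · simp only [h, dif_neg, not_false_eq_true, measurable_const]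
  calc ∫ ω, dD S (shiftWeights k fun e => WD e ω) u ∂ℙ
      = ∫ ω, Φ (fun e => WD (σ e).val ω) ∂ℙ :=
        integral_congr_ae <| ae_of_all _ fun ω =>
          dD_congr (fun a b hab => by simp [hab, σ, shiftWeights]) u
    _ = ∫ ω, Φ (fun e => WD e.val ω) ∂ℙ :=
        hWDindep.integral_comp_precomp (fun e => hWDmeas _) hσ
          (fun e => (hWDdist _).trans (hWDdist _).symm) hΦ
    _ = ∫ ω, dD S (fun e => WD e ω) u ∂ℙ :=
        integral_congr_ae (ae_of_all _ fun ω => dD_congr (fun a b hab => by simp [hab]) u)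

theorem integral_dD_lt_integral_dD_add [Countable G] [IsProbabilityMeasure (ℙ : Measure Ω)]
    (hS : S.Nonempty) (hWDmeas : ∀ e, Measurable (WD e))
    (hWDindep : iIndepFun (fun e : {e : (G × ℕ) × (G × ℕ) // adjD S e.1 e.2} => WD e.val) ℙ)
    (hWDdist : ∀ e : {e : (G × ℕ) × (G × ℕ) // adjD S e.1 e.2}, Measure.map (WD e.val) ℙ = μ)
    (hatom : ∀ a : ℝ, μ {a} = 0) (hsupp : μ (Set.Iio 0) = 0) (hmean : Integrable id μ)
    (x : G) (n : ℕ) {k : ℕ} (hk : 0 < k) :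
    ∫ ω, dD S (fun e => WD e ω) (x, n) ∂ℙ < ∫ ω, dD S (fun e => WD e ω) (x, n + k) ∂ℙ := by
  classical
  have hint : ∀ u v, adjD S u v → Integrable (WD (u, v)) ℙ :=
    fun u v => integrable_weight hWDmeas hWDdist hmean
  have hint_shift : Integrable (fun ω => dD S (shiftWeights k fun e => WD e ω) (x, n)) ℙ :=
    integrable_dD hS (X := fun e ω => shiftWeights k (fun e => WD e ω) e)
      (fun u v huv => hint _ _ (huv.shift k)) _
  set τ : Ω → ℝ := fun ω =>
    (x • S ^ n).inf' hS.pow.smul_finset fun y => dD S (fun e => WD e ω) (y, k)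
  have hτ_int : Integrable τ ℙ := by
    convert Finset.integrable_inf' (s := x • S ^ n) hS.pow.smul_finset fun y _ =>
      integrable_dD hS hint (y, k) using 1
    exact funext fun ω =>
      (Finset.inf'_apply (f := fun y ω => dD S (fun e => WD e ω) (y, k)) _ _).symm
  have hτ_pos : ∀ᵐ ω ∂ℙ, 0 < τ ω := by
    have hpos : μ (Set.Ioi 0)ᶜ = 0 := by
      rw [Set.compl_Ioi, ← Set.Iio_union_right]
      exact measure_union_null hsupp (hatom 0)
    filter_upwards [ae_forall_weight_mem hWDmeas hWDdist measurableSet_Ioi hpos] with ω hω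
    exact (Finset.lt_inf'_iff _).2 fun y _ => dD_pos hS hω y hk
  have hτ_mean : 0 < ∫ ω, τ ω ∂ℙ := by
    refine (integral_pos_iff_support_of_nonneg_ae (hτ_pos.mono fun ω h => h.le) hτ_int).2 ?_
    rw [pos_iff_ne_zero, Ne, Measure.measure_support_eq_zero_iff ℙ]
    intro hτ_zero
    obtain ⟨ω, hpos, hzero⟩ := (hτ_pos.and hτ_zero).exists
    exact hpos.ne' hzero
  calc ∫ ω, dD S (fun e => WD e ω) (x, n) ∂ℙ
      < ∫ ω, dD S (shiftWeights k fun e => WD e ω) (x, n) ∂ℙ + ∫ ω, τ ω ∂ℙ := by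
        rw [integral_dD_shiftWeights hS hWDmeas hWDindep hWDdist]
        linarith
    _ = ∫ ω, (dD S (shiftWeights k fun e => WD e ω) (x, n) + τ ω) ∂ℙ :=
        (integral_add hint_shift hτ_int).symm
    _ ≤ ∫ ω, dD S (fun e => WD e ω) (x, n + k) ∂ℙ := by
        refine integral_mono (hint_shift.add hτ_int) (integrable_dD hS hint _) fun ω => ?_
        rw [add_comm n k]
        exact dD_shiftWeights_add_inf'_le hS k x n

theorem measure_dD_sub_lt_neg_le [Countable G] [IsProbabilityMeasure (ℙ : Measure Ω)]
    (hS : S.Nonempty) (hWDmeas : ∀ e, Measurable (WD e))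
    (hWDdist : ∀ e : {e : (G × ℕ) × (G × ℕ) // adjD S e.1 e.2}, Measure.map (WD e.val) ℙ = μ)
    (hsupp : μ (Set.Iio 0) = 0) (hmean : Integrable id μ) {x : G} {n k : ℕ} {q : ℕ → G}
    (hq0 : q 0 = x) (hqk : q k = x) (hq : ∀ j < k, (q j)⁻¹ * q (j + 1) ∈ S)
    (hmono : ∫ ω, dD S (fun e => WD e ω) (x, n) ∂ℙ ≤ ∫ ω, dD S (fun e => WD e ω) (x, n + k) ∂ℙ)
    {K : ℝ} (hK : 0 < K) :
    ℙ {ω | dD S (fun e => WD e ω) (x, n + k) - dD S (fun e => WD e ω) (x, n) < -K} ≤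
      ENNReal.ofReal (k * (∫ y, y ∂μ) / K) := by
  have hint : ∀ u v, adjD S u v → Integrable (WD (u, v)) ℙ :=
    fun u v => integrable_weight hWDmeas hWDdist hmean
  set p : ℕ → G × ℕ := fun j => (q j, n + k - j)
  have hp : ∀ j < k, adjD S (p j) (p (j + 1)) := fun j hj => ⟨by simp only [p]; omega, hq j hj⟩
  set Λ : Ω → ℝ := fun ω => wtD (fun e => WD e ω) p k
  have hΛ_int : Integrable Λ ℙ :=
    integrable_finsetSum _ fun j hj => hint _ _ (hp j (Finset.mem_range.1 hj))
  have hΛ_mean : ∫ ω, Λ ω ∂ℙ = k * ∫ y, y ∂μ := by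
    simp only [Λ, wtD]
    rw [integral_finsetSum _ fun j hj => hint _ _ (hp j (Finset.mem_range.1 hj)),
      Finset.sum_congr rfl fun j hj =>
        integral_weight hWDmeas hWDdist (hp j (Finset.mem_range.1 hj)),
      Finset.sum_const, Finset.card_range, nsmul_eq_mul]
  have hΛ_nonneg : ∀ᵐ ω ∂ℙ, 0 ≤ Λ ω := by
    have hμ : μ (Set.Ici 0)ᶜ = 0 := by rwa [Set.compl_Ici]
    filter_upwards [ae_forall_weight_mem hWDmeas hWDdist measurableSet_Ici hμ] with ω hω
    exact Finset.sum_nonneg fun j hj => hω _ _ (hp j (Finset.mem_range.1 hj))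
  have hle : ∀ ω, dD S (fun e => WD e ω) (x, n + k) ≤ Λ ω + dD S (fun e => WD e ω) (x, n) :=
    fun ω => by
    simpa [p, hq0, hqk] using dD_le_wtD_add (W := fun e => WD e ω) hS hp
  rw [← hΛ_mean]
  exact measure_sub_lt_neg_le (integrable_dD hS hint _) (integrable_dD hS hint _) hΛ_int
    hΛ_nonneg (ae_of_all _ hle) hmono hK

end Model

theorem directed_passage_time_vertical_growth_general
    {G : Type*} [Group G] [Countable G] (S : Finset G)
    {Ω : Type*} [MeasureSpace Ω] [IsProbabilityMeasure (ℙ : Measure Ω)]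
    (μ : Measure ℝ)
    (hatom : ∀ a : ℝ, μ {a} = 0) (hsupp : μ (Set.Iio 0) = 0)
    (hmean : Integrable id μ)
    (WD : (G × ℕ) × (G × ℕ) → Ω → ℝ) (hWDmeas : ∀ e, Measurable (WD e))
    (hWDindep : iIndepFun
      (fun e : {e : (G × ℕ) × (G × ℕ) // adjD S e.1 e.2} => WD e.val) ℙ)
    (hWDdist : ∀ e : {e : (G × ℕ) × (G × ℕ) // adjD S e.1 e.2},
      Measure.map (WD e.val) ℙ = μ)
    (k : ℕ) (hk : 0 < k)
    (hwalk : ∀ x : G, ∃ q : ℕ → G, q 0 = x ∧ q k = x ∧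
      ∀ j < k, (q j)⁻¹ * q (j + 1) ∈ S) :
    (∀ (x : G) (n : ℕ),
      ∫ ω, dD S (fun e => WD e ω) (x, n) ∂ℙ <
        ∫ ω, dD S (fun e => WD e ω) (x, n + k) ∂ℙ) ∧
    (∀ ε : ℝ, 0 < ε → ∃ K : ℝ, 0 < K ∧ ∀ (x : G) (n : ℕ),
      ℙ {ω | dD S (fun e => WD e ω) (x, n + k) -
          dD S (fun e => WD e ω) (x, n) < -K} ≤ ENNReal.ofReal ε) := by
  have hS : S.Nonempty := by
    obtain ⟨q, -, -, hq⟩ := hwalk 1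
    exact ⟨_, hq 0 hk⟩
  have hlt := fun x n =>
    integral_dD_lt_integral_dD_add hS hWDmeas hWDindep hWDdist hatom hsupp hmean x n hk
  refine ⟨hlt, fun ε hε => ?_⟩
  have hm : 0 ≤ ∫ y, y ∂μ :=
    integral_nonneg_of_ae ((measure_eq_zero_iff_ae_notMem.1 hsupp).mono fun y hy => not_lt.1 hy)
  refine ⟨k * (∫ y, y ∂μ) / ε + 1, by positivity, fun x n => ?_⟩
  obtain ⟨q, hq0, hqk, hq⟩ := hwalk x
  refine (measure_dD_sub_lt_neg_le hS hWDmeas hWDdist hsupp hmean hq0 hqk hq (hlt x n).le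
    (by positivity)).trans (ENNReal.ofReal_le_ofReal ?_)
  rw [div_le_iff₀ (by positivity), mul_add, mul_div_cancel₀ _ hε.ne']
  linarith

/-- Lemma 4.1 of "Stationary Eden Model on groups": in the directed model on
`Ĝ = G × ℕ` with i.i.d. non-atomic edge weights of finite mean, for every
increment `k` for which a directed path from `(x, n+k)` to `(x, n)` exists
(i.e. a closed walk of length `k` in `G`), the expected passage times
`m_n = E[d̂_ω((x,n), G)]` are strictly increasing: `m_n < m_{n+k}`; moreover,
for every `ε > 0` there is `K > 0`, independent of `n` and `x`, with
`P[d̂_ω((x,n+k), G) - d̂_ω((x,n), G) < -K] ≤ ε`. -/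
theorem directed_passage_time_vertical_growth
    {G : Type*} [Group G] [Countable G] (S : Finset G)
    (hSsym : ∀ s ∈ S, s⁻¹ ∈ S) (hS1 : (1 : G) ∉ S)
    (hSgen : Subgroup.closure (S : Set G) = ⊤)
    {Ω : Type*} [MeasureSpace Ω] [IsProbabilityMeasure (ℙ : Measure Ω)]
    (μ : Measure ℝ) [IsProbabilityMeasure μ]
    (hatom : ∀ a : ℝ, μ {a} = 0) (hsupp : μ (Set.Iio 0) = 0)
    (hmean : Integrable id μ)
    (WD : (G × ℕ) × (G × ℕ) → Ω → ℝ) (hWDmeas : ∀ e, Measurable (WD e))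
    (hWDindep : iIndepFun
      (fun e : {e : (G × ℕ) × (G × ℕ) // adjD S e.1 e.2} => WD e.val) ℙ)
    (hWDdist : ∀ e : {e : (G × ℕ) × (G × ℕ) // adjD S e.1 e.2},
      Measure.map (WD e.val) ℙ = μ)
    (k : ℕ) (hk : 0 < k)
    (hwalk : ∀ x : G, ∃ q : ℕ → G, q 0 = x ∧ q k = x ∧
      ∀ j < k, (q j)⁻¹ * q (j + 1) ∈ S) :
    (∀ (x : G) (n : ℕ),
      ∫ ω, dD S (fun e => WD e ω) (x, n) ∂ℙ <
        ∫ ω, dD S (fun e => WD e ω) (x, n + k) ∂ℙ) ∧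
    (∀ ε : ℝ, 0 < ε → ∃ K : ℝ, 0 < K ∧ ∀ (x : G) (n : ℕ),
      ℙ {ω | dD S (fun e => WD e ω) (x, n + k) -
          dD S (fun e => WD e ω) (x, n) < -K} ≤ ENNReal.ofReal ε) :=
  directed_passage_time_vertical_growth_general S μ hatom hsupp hmean WD hWDmeas hWDindep hWDdist k
    hk hwalk
end

section
/- In a vertex-transitive graph G (e.g. a Cayley graph), for every vertex x, every radius R > 0, and every vertex y with d(x,y) ≤ 3R+1, there exists a path in G from y to some vertex in S_R(x) ∪ S_{R+1}(x) of length exactly 2R, where S_r(x) denotes the sphere of radius r around x in the graph metric. -/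
/-!
Descending along a geodesic towards `x` always works, and a walk can be lengthened by any even
number of steps by bouncing along an edge at its end. So if `y` is far from `x`, walk down
towards `x` and bounce; if `y` is close to `x`, walk all the way to `x`, then out along a
geodesic to the sphere, which is nonempty because balls in a Cayley graph of an infinite group
are finite, and bounce there. Choosing the radius `R` or `R + 1` fixes the parity.
-/

open SimpleGraph

namespace SimpleGraph

variable {V : Type*} {Γ : SimpleGraph V}

theorem Connected.exists_walk_of_le_dist (hc : Γ.Connected) {x u : V} {k : ℕ}
    (hk : k ≤ Γ.dist x u) :
    ∃ (v : V) (w : Γ.Walk u v), w.length = k ∧ Γ.dist x v = Γ.dist x u - k := by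
  obtain ⟨p, hp⟩ := hc.exists_walk_length_eq_dist u x
  rw [dist_comm] at hk ⊢
  refine ⟨p.getVert k, p.take k, by simp [hp, hk], ?_⟩
  have hdown : Γ.dist (p.getVert k) x ≤ Γ.dist u x - k := by
    simpa [hp] using dist_le (p.drop k)
  have htake : Γ.dist u (p.getVert k) ≤ k := by simpa [hk, hp] using dist_le (p.take k)
  have hup : Γ.dist u x ≤ Γ.dist u (p.getVert k) + Γ.dist (p.getVert k) x := hc.dist_triangle
  rw [dist_comm]
  omega

theorem Connected.finite_setOf_dist_le (hc : Γ.Connected)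
    (hfin : ∀ v, (Γ.neighborSet v).Finite) (x : V) (n : ℕ) :
    {z | Γ.dist x z ≤ n}.Finite := by
  induction n with
  | zero => simp [hc.dist_eq_zero_iff]
  | succ n ih =>
    refine (ih.union (ih.biUnion fun v _ => hfin v)).subset fun z (hz : Γ.dist x z ≤ n + 1) => ?_
    rcases Nat.lt_or_ge (Γ.dist x z) (n + 1) with hlt | hge
    · exact Or.inl (Nat.le_of_lt_succ hlt)
    · obtain ⟨v, w, hw, hv⟩ := hc.exists_walk_of_le_dist (show 1 ≤ Γ.dist x z by omega)
      exact Or.inr (Set.mem_biUnion (x := v) (show Γ.dist x v ≤ n by omega)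
        (w.adj_of_length_eq_one hw).symm)

theorem Connected.exists_dist_eq [Infinite V] (hc : Γ.Connected)
    (hfin : ∀ v, (Γ.neighborSet v).Finite) (x : V) (n : ℕ) : ∃ z, Γ.dist x z = n := by
  obtain ⟨u, hu⟩ := (hc.finite_setOf_dist_le hfin x n).infinite_compl.nonempty
  replace hu : n < Γ.dist x u := by simpa using hu
  obtain ⟨z, -, -, hz⟩ := hc.exists_walk_of_le_dist (Nat.sub_le (Γ.dist x u) n)
  exact ⟨z, by omega⟩

theorem Walk.exists_length_eq_of_le {u v : V} (p : Γ.Walk u v) (hv : ∃ w, Γ.Adj v w)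
    {L : ℕ} (hle : p.length ≤ L) (hpar : p.length % 2 = L % 2) :
    ∃ q : Γ.Walk u v, q.length = L := by
  obtain ⟨w, hvw⟩ := hv
  have bounce : ∀ n : ℕ, ∃ c : Γ.Walk v v, c.length = 2 * n := by
    intro n
    induction n with
    | zero => exact ⟨nil, rfl⟩
    | succ n ih =>
      obtain ⟨c, hc⟩ := ih
      exact ⟨cons hvw (cons hvw.symm c), by simp [hc]; ring⟩
  obtain ⟨c, hc⟩ := bounce ((L - p.length) / 2)
  exact ⟨p.append c, by rw [Walk.length_append, hc]; omega⟩

variable [Nontrivial V]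

theorem Connected.exists_walk_length_eq_of_le_dist (hc : Γ.Connected) {x y : V} {ℓ L : ℕ}
    (hℓ : ℓ ≤ Γ.dist x y) (hL : Γ.dist x y ≤ ℓ + L)
    (hpar : (Γ.dist x y + ℓ) % 2 = L % 2) :
    ∃ (z : V) (w : Γ.Walk y z), w.length = L ∧ Γ.dist x z = ℓ := by
  obtain ⟨z, p, hp, hz⟩ := hc.exists_walk_of_le_dist (Nat.sub_le (Γ.dist x y) ℓ)
  obtain ⟨q, hq⟩ := p.exists_length_eq_of_le (hc.preconnected.exists_adj_of_nontrivial z)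
    (L := L) (by omega) (by omega)
  exact ⟨z, q, hq, by omega⟩

theorem Connected.exists_walk_length_eq_of_dist_add_le (hc : Γ.Connected) {x y z : V}
    {L : ℕ} (hL : Γ.dist x y + Γ.dist x z ≤ L)
    (hpar : (Γ.dist x y + Γ.dist x z) % 2 = L % 2) :
    ∃ w : Γ.Walk y z, w.length = L := by
  obtain ⟨p, hp⟩ := hc.exists_walk_length_eq_dist y x
  obtain ⟨q, hq⟩ := hc.exists_walk_length_eq_dist x z
  refine (p.append q).exists_length_eq_of_le (hc.preconnected.exists_adj_of_nontrivial z) ?_ ?_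
    <;> rw [Walk.length_append, hp, hq, dist_comm] <;> omega

section Cayley

variable {G : Type*} [Group G] {S : Finset G} {Γ : SimpleGraph G}

theorem Reachable.mul_left (hΓ : ∀ u v : G, Γ.Adj u v ↔ u ≠ v ∧ u⁻¹ * v ∈ S) (g : G)
    {u v : G} (h : Γ.Reachable u v) : Γ.Reachable (g * u) (g * v) :=
  h.map ⟨(g * ·), fun {a b} hab => by simp_all [mul_assoc]⟩

theorem connected_of_closure_eq_top (hΓ : ∀ u v : G, Γ.Adj u v ↔ u ≠ v ∧ u⁻¹ * v ∈ S)
    (hgen : Subgroup.closure (S : Set G) = ⊤) : Γ.Connected := by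
  refine (connected_iff_exists_forall_reachable Γ).2 ⟨1, fun g => ?_⟩
  induction (hgen ▸ Subgroup.mem_top g : g ∈ Subgroup.closure (S : Set G))
    using Subgroup.closure_induction with
  | mem s hs =>
    by_cases h1 : (1 : G) = s
    · exact h1 ▸ Reachable.refl 1
    · exact Adj.reachable ((hΓ 1 s).2 ⟨h1, by simpa using hs⟩)
  | one => exact Reachable.refl 1
  | mul a b _ _ ha hb => exact ha.trans (by simpa using hb.mul_left hΓ a)
  | inv a _ ha => exact (by simpa using ha.mul_left hΓ a⁻¹ : Γ.Reachable a⁻¹ 1).symm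

theorem neighborSet_finite (hΓ : ∀ u v : G, Γ.Adj u v ↔ u ≠ v ∧ u⁻¹ * v ∈ S) (u : G) :
    (Γ.neighborSet u).Finite :=
  (S.finite_toSet.image (u * ·)).subset fun v hv =>
    ⟨u⁻¹ * v, ((hΓ u v).1 hv).2, mul_inv_cancel_left u v⟩

end Cayley

end SimpleGraph

theorem cayley_reach_sphere_in_2R_steps_general {G : Type*} [Group G] [Infinite G]
    (S : Finset G)
    (hgen : Subgroup.closure (S : Set G) = ⊤)
    (Γ : SimpleGraph G) (hΓ : ∀ u v : G, Γ.Adj u v ↔ u ≠ v ∧ u⁻¹ * v ∈ S)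
    (x y : G) (R : ℕ) (hd : Γ.dist x y ≤ 3 * R + 1) :
    ∃ (z : G) (w : Γ.Walk y z), w.length = 2 * R ∧
      (Γ.dist x z = R ∨ Γ.dist x z = R + 1) := by
  have hc := connected_of_closure_eq_top hΓ hgen
  obtain ⟨ℓ, hℓ, hpar⟩ : ∃ ℓ, (ℓ = R ∨ ℓ = R + 1) ∧ (Γ.dist x y + ℓ) % 2 = 2 * R % 2 :=
    ⟨if (Γ.dist x y + R) % 2 = 0 then R else R + 1, by split_ifs <;> omega⟩
  have hsph : ∃ (z : G) (w : Γ.Walk y z), w.length = 2 * R ∧ Γ.dist x z = ℓ := by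
    by_cases hfar : ℓ ≤ Γ.dist x y
    · exact hc.exists_walk_length_eq_of_le_dist hfar (by omega) hpar
    · obtain ⟨z, hz⟩ := hc.exists_dist_eq (neighborSet_finite hΓ) x ℓ
      obtain ⟨w, hw⟩ := hc.exists_walk_length_eq_of_dist_add_le
        (show Γ.dist x y + Γ.dist x z ≤ 2 * R by omega) (by omega)
      exact ⟨z, w, hw, hz⟩
  obtain ⟨z, w, hw, hz⟩ := hsph
  exact ⟨z, w, hw, hz ▸ hℓ⟩

/-- Remark 4.4 ("dead ends") of "Stationary Eden Model on groups": in the Cayley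
graph of an infinite finitely generated group, for every vertex `x`, every
radius `R > 0` and every vertex `y` with `d(x,y) ≤ 3R + 1`, there is a walk of
length exactly `2R` from `y` to some vertex of the sphere `S_R(x) ∪ S_{R+1}(x)`. -/
theorem cayley_reach_sphere_in_2R_steps {G : Type*} [Group G] [Infinite G]
    (S : Finset G) (hsym : ∀ s ∈ S, s⁻¹ ∈ S) (h1 : (1 : G) ∉ S)
    (hgen : Subgroup.closure (S : Set G) = ⊤)
    (Γ : SimpleGraph G) (hΓ : ∀ u v : G, Γ.Adj u v ↔ u ≠ v ∧ u⁻¹ * v ∈ S)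
    (x y : G) (R : ℕ) (hR : 0 < R) (hd : Γ.dist x y ≤ 3 * R + 1) :
    ∃ (z : G) (w : Γ.Walk y z), w.length = 2 * R ∧
      (Γ.dist x z = R ∨ Γ.dist x z = R + 1) :=
  cayley_reach_sphere_in_2R_steps_general S hgen Γ hΓ x y R hd
end

section
/- In either the directed or undirected model on G × Z₊, if the n-th level set T^n(x) is nonempty then T^m(x) is nonempty for all 1 ≤ m ≤ n; moreover, almost surely the tree T(x) is infinite if and only if T^n(x) ≠ ∅ for all n ≥ 1. -/
open MeasureTheory ProbabilityTheory
open scoped ENNReal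

/-- Undirected adjacency on `G × ℕ`: horizontal Cayley edges on levels `n ≥ 1`
and vertical edges `(x,n) — (x,n+1)`; no edges inside the base level. -/
def adjU {G : Type*} [Group G] (S : Finset G) (u v : G × ℕ) : Prop :=
  (u.2 = v.2 ∧ 1 ≤ u.2 ∧ u.1⁻¹ * v.1 ∈ S) ∨
    (u.1 = v.1 ∧ (u.2 + 1 = v.2 ∨ v.2 + 1 = u.2))

/-- `e` is an (unordered) edge of the undirected graph `Ḡ`. -/
def IsEdgeU {G : Type*} [Group G] (S : Finset G) (e : Sym2 (G × ℕ)) : Prop :=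
  ∃ u v : G × ℕ, e = s(u, v) ∧ adjU S u v

/-- Weight of an undirected path with `n` steps. -/
def wtU {G : Type*} (W : Sym2 (G × ℕ) → ℝ) (p : ℕ → G × ℕ) (n : ℕ) : ℝ :=
  ∑ j ∈ Finset.range n, W s(p j, p (j + 1))

/-- Undirected passage time `d̄_ω(u, G)` from `u` to the base level `G × {0}`. -/
noncomputable def dU {G : Type*} [Group G] (S : Finset G)
    (W : Sym2 (G × ℕ) → ℝ) (u : G × ℕ) : ℝ :=
  sInf {r : ℝ | ∃ (n : ℕ) (p : ℕ → G × ℕ), p 0 = u ∧ (p n).2 = 0 ∧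
    (∀ j < n, adjU S (p j) (p (j + 1))) ∧ r = wtU W p n}

/-- The directed geodesic tree `T̂(x)`: the union of all directed geodesics to
the base which terminate at `(x, 0)`. -/
def TD {G : Type*} [Group G] (S : Finset G)
    (W : (G × ℕ) × (G × ℕ) → ℝ) (x : G) : Set (G × ℕ) :=
  {u | ∃ (n : ℕ) (p : ℕ → G × ℕ), p 0 = u ∧ p n = (x, 0) ∧
    (∀ j < n, adjD S (p j) (p (j + 1))) ∧ wtD W p n = dD S W u}

/-- The undirected geodesic tree `T̄(x)`: the union of all geodesics to the base
which terminate at `(x, 0)`. -/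
def TU {G : Type*} [Group G] (S : Finset G)
    (W : Sym2 (G × ℕ) → ℝ) (x : G) : Set (G × ℕ) :=
  {u | ∃ (n : ℕ) (p : ℕ → G × ℕ), p 0 = u ∧ p n = (x, 0) ∧
    (∀ j < n, adjU S (p j) (p (j + 1))) ∧ wtU W p n = dU S W u}

/-- Restricted undirected passage time: infimum of path weights over paths from
`u` to the base which stay inside the slab `Λ_L` (levels `0` through `L`). -/
noncomputable def dUslab {G : Type*} [Group G] (S : Finset G)
    (W : Sym2 (G × ℕ) → ℝ) (L : ℕ) (u : G × ℕ) : ℝ :=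
  sInf {r : ℝ | ∃ (n : ℕ) (p : ℕ → G × ℕ), p 0 = u ∧ (p n).2 = 0 ∧
    (∀ j ≤ n, (p j).2 ≤ L) ∧ (∀ j < n, adjU S (p j) (p (j + 1))) ∧
    r = wtU W p n}

/-- The `n`-th level set `T̄ⁿ(x) = T̄_{Λ_n}(x) ∩ Gₙ` of the undirected model:
vertices `(y, n)` whose lightest path to the base among paths inside the slab
`Λ_n` ends at `(x, 0)`. -/
def TUn {G : Type*} [Group G] (S : Finset G)
    (W : Sym2 (G × ℕ) → ℝ) (n : ℕ) (x : G) : Set G :=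
  {y : G | ∃ (k : ℕ) (p : ℕ → G × ℕ), p 0 = (y, n) ∧ p k = (x, 0) ∧
    (∀ j ≤ k, (p j).2 ≤ n) ∧ (∀ j < k, adjU S (p j) (p (j + 1))) ∧
    wtU W p k = dUslab S W n (y, n)}

/-- The `n`-th level set `T̂ⁿ(x) = T̂(x) ∩ Gₙ` of the directed model. -/
def TDn {G : Type*} [Group G] (S : Finset G)
    (W : (G × ℕ) × (G × ℕ) → ℝ) (n : ℕ) (x : G) : Set G :=
  {y : G | (y, n) ∈ TD S W x}

/-!
Every tail of a geodesic is a geodesic. In the directed model the height drops by one along each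
edge, so tails of a geodesic from level `n` meet every lower level; and a level of `T̂(x)` lies in
a ball of the Cayley graph, hence is finite. In the undirected model the height changes by at most
one per step, so the last visit of a geodesic to level `m` starts a tail that stays in the slab
`Λ_m`, i.e. a point of `Tᵐ(x)`. This gives the monotonicity of the levels and, as soon as the
levels of `T(x)` are finite, the "only if" direction.

The levels of `T(x)` are a.s. finite by mass transport: the expected size of level `m` of `T(x)`
is `∑_b P((b, m) ∈ T(x)) = ∑_b P((x, m) ∈ T(b)) ≤ 1`, because with independent atomless weights
distinct edge sets a.s. have distinct weights, so every vertex lies in exactly one tree.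

Conversely, if every `Tⁿ(x)` is nonempty, Kőnig's lemma in the locally finite graph extracts from
the slab geodesics an infinite ray from `(x, 0)` whose reversed prefixes are geodesics in slabs of
arbitrary height, hence in the whole graph; its vertices are distinct points of `T(x)`.
-/

open Filter

namespace FirstPassage

variable {α : Type*}

def IsPath (R : α → α → Prop) (p : ℕ → α) (k : ℕ) : Prop :=
  ∀ j < k, R (p j) (p (j + 1))

def pathWeight (w : α → α → ℝ) (p : ℕ → α) (k : ℕ) : ℝ :=
  ∑ j ∈ Finset.range k, w (p j) (p (j + 1))

def pathWeights (R : α → α → Prop) (w : α → α → ℝ) (V B : Set α) (u : α) : Set ℝ :=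
  {r | ∃ (k : ℕ) (p : ℕ → α), p 0 = u ∧ p k ∈ B ∧ (∀ j ≤ k, p j ∈ V) ∧ IsPath R p k ∧
    r = pathWeight w p k}

noncomputable def passTime (R : α → α → Prop) (w : α → α → ℝ) (V B : Set α) (u : α) : ℝ :=
  sInf (pathWeights R w V B u)

def IsGeodesic (R : α → α → Prop) (w : α → α → ℝ) (V B : Set α) (p : ℕ → α) (k : ℕ) : Prop :=
  p k ∈ B ∧ (∀ j ≤ k, p j ∈ V) ∧ IsPath R p k ∧ pathWeight w p k = passTime R w V B (p 0)

def symmWeight (W : Sym2 α → ℝ) (a b : α) : ℝ := W s(a, b)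

variable {R : α → α → Prop} {w : α → α → ℝ} {V B : Set α} {p q : ℕ → α} {j k l : ℕ}

lemma IsPath.congr (hp : IsPath R p k) (h : ∀ t ≤ k, p t = q t) : IsPath R q k :=
  fun t ht => h t ht.le ▸ h (t + 1) ht ▸ hp t ht

lemma isPath_add : IsPath R p (j + l) ↔ IsPath R p j ∧ IsPath R (fun t => p (j + t)) l := by
  refine ⟨fun hp => ⟨fun t ht => hp t (by omega), fun t ht => hp (j + t) (by omega)⟩,
    fun ⟨hp, hq⟩ t ht => ?_⟩
  rcases lt_or_ge t j with htj | htj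
  · exact hp t htj
  · obtain ⟨s, rfl⟩ := Nat.exists_eq_add_of_le htj
    exact hq s (by omega)

lemma IsPath.reverse (hp : IsPath R p k) : IsPath (flip R) (fun t => p (k - t)) k := by
  intro t ht
  have := hp (k - (t + 1)) (by omega)
  rwa [show k - (t + 1) + 1 = k - t by omega] at this

lemma pathWeight_congr (h : ∀ t ≤ k, p t = q t) : pathWeight w p k = pathWeight w q k :=
  Finset.sum_congr rfl fun t ht => by
    rw [Finset.mem_range] at ht
    rw [h t ht.le, h (t + 1) ht]

lemma pathWeight_add :
    pathWeight w p (j + l) = pathWeight w p j + pathWeight w (fun t => p (j + t)) l :=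
  Finset.sum_range_add _ j l

lemma IsPath.pathWeight_nonneg (hw : ∀ a b, R a b → 0 ≤ w a b) (hp : IsPath R p k) :
    0 ≤ pathWeight w p k :=
  Finset.sum_nonneg fun t ht => hw _ _ (hp t (Finset.mem_range.mp ht))

lemma IsPath.pathWeight_pos (hw : ∀ a b, R a b → 0 < w a b) (hp : IsPath R p k) (hk : 0 < k) :
    0 < pathWeight w p k :=
  Finset.sum_pos (fun t ht => hw _ _ (hp t (Finset.mem_range.mp ht))) ⟨0, by simpa⟩

lemma bddBelow_pathWeights (hw : ∀ a b, R a b → 0 ≤ w a b) (u : α) :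
    BddBelow (pathWeights R w V B u) :=
  ⟨0, by rintro _ ⟨k, p, -, -, -, hp, rfl⟩; exact hp.pathWeight_nonneg hw⟩

lemma passTime_le (hw : ∀ a b, R a b → 0 ≤ w a b) {u : α} {r : ℝ}
    (hr : r ∈ pathWeights R w V B u) : passTime R w V B u ≤ r :=
  csInf_le (bddBelow_pathWeights hw u) hr

lemma passTime_univ {u : α} : passTime R w Set.univ B u =
    sInf {r | ∃ (k : ℕ) (p : ℕ → α), p 0 = u ∧ p k ∈ B ∧ IsPath R p k ∧ r = pathWeight w p k} := by
  unfold passTime pathWeights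
  simp only [Set.mem_univ, implies_true, true_and]

lemma append_mem_pathWeights (hp : IsPath R p j) (hpV : ∀ t ≤ j, p t ∈ V) (hq : IsPath R q l)
    (hqV : ∀ t ≤ l, q t ∈ V) (hqB : q l ∈ B) (hpq : q 0 = p j) :
    pathWeight w p j + pathWeight w q l ∈ pathWeights R w V B (p 0) := by
  set c : ℕ → α := fun t => if t ≤ j then p t else q (t - j)
  have hcp : ∀ t ≤ j, c t = p t := fun t ht => if_pos ht
  have hcq : ∀ t ≤ l, c (j + t) = q t := by
    intro t _
    rcases Nat.eq_zero_or_pos t with rfl | ht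
    · simp [c, hpq]
    · simp [c, show ¬ j + t ≤ j by omega]
  refine ⟨j + l, c, hcp 0 (Nat.zero_le _), by simpa [hcq l le_rfl] using hqB, fun t ht => ?_,
    isPath_add.2 ⟨hp.congr fun t ht => (hcp t ht).symm, hq.congr fun t ht => (hcq t ht).symm⟩,
    by rw [pathWeight_add, pathWeight_congr hcp, pathWeight_congr hcq]⟩
  rcases le_or_gt t j with htj | htj
  · exact hcp t htj ▸ hpV t htj
  · obtain ⟨s, rfl⟩ := Nat.exists_eq_add_of_le htj.le
    exact (hcq s (by omega)).symm ▸ hqV s (by omega)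

lemma IsPath.self_mem_pathWeights (hp : IsPath R p k) (hpV : ∀ t ≤ k, p t ∈ V) (hB : p k ∈ B) :
    pathWeight w p k ∈ pathWeights R w V B (p 0) :=
  ⟨k, p, rfl, hB, hpV, hp, rfl⟩

lemma passTime_le_add (hw : ∀ a b, R a b → 0 ≤ w a b) (hp : IsPath R p j)
    (hpV : ∀ t ≤ j, p t ∈ V) (hne : (pathWeights R w V B (p j)).Nonempty) :
    passTime R w V B (p 0) ≤ pathWeight w p j + passTime R w V B (p j) := by
  rw [← sub_le_iff_le_add']
  refine le_csInf hne ?_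
  rintro _ ⟨l, q, hq0, hqB, hqV, hq, rfl⟩
  rw [sub_le_iff_le_add']
  exact passTime_le hw (append_mem_pathWeights hp hpV hq hqV hqB hq0)

lemma IsGeodesic.isPath (hp : IsGeodesic R w V B p k) : IsPath R p k := hp.2.2.1

lemma IsGeodesic.congr (hp : IsGeodesic R w V B p k) (h : ∀ t ≤ k, p t = q t) :
    IsGeodesic R w V B q k := by
  obtain ⟨hB, hV, hpath, hwt⟩ := hp
  refine ⟨h k le_rfl ▸ hB, fun t ht => h t ht ▸ hV t ht, hpath.congr h, ?_⟩
  rw [← pathWeight_congr h, hwt, h 0 (Nat.zero_le _)]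

lemma IsGeodesic.of_forall_le (hw : ∀ a b, R a b → 0 ≤ w a b) (hp : IsPath R p k)
    (hpV : ∀ t ≤ k, p t ∈ V) (hB : p k ∈ B)
    (hle : ∀ r ∈ pathWeights R w V B (p 0), pathWeight w p k ≤ r) : IsGeodesic R w V B p k :=
  ⟨hB, hpV, hp, le_antisymm (le_csInf ⟨_, hp.self_mem_pathWeights hpV hB⟩ hle)
    (passTime_le hw (hp.self_mem_pathWeights hpV hB))⟩

lemma IsGeodesic.tail (hw : ∀ a b, R a b → 0 ≤ w a b) (hp : IsGeodesic R w V B p k)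
    (hj : j ≤ k) : IsGeodesic R w V B (fun t => p (j + t)) (k - j) := by
  obtain ⟨hB, hV, hpath, hwt⟩ := hp
  obtain ⟨l, rfl⟩ := Nat.exists_eq_add_of_le hj
  rw [Nat.add_sub_cancel_left]
  obtain ⟨hpre, htail⟩ := isPath_add.1 hpath
  have htailV : ∀ t ≤ l, p (j + t) ∈ V := fun t ht => hV _ (by omega)
  have hmem := htail.self_mem_pathWeights (w := w) htailV hB
  refine ⟨hB, htailV, htail, le_antisymm ?_ (passTime_le hw hmem)⟩
  have := passTime_le_add hw hpre (fun t ht => hV t (by omega)) ⟨_, hmem⟩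
  rw [← hwt, pathWeight_add] at this
  simpa using this

lemma IsGeodesic.ne_of_lt (hw : ∀ a b, R a b → 0 < w a b) (hp : IsGeodesic R w V B p k)
    {i : ℕ} (hij : i < j) (hjk : j ≤ k) : p i ≠ p j := by
  intro heq
  obtain ⟨hB, hV, hpath, hwt⟩ := hp
  obtain ⟨l, rfl⟩ := Nat.exists_eq_add_of_le hjk
  obtain ⟨d, rfl⟩ := Nat.exists_eq_add_of_le hij.le
  obtain ⟨hpre, htail⟩ := isPath_add.1 hpath
  obtain ⟨hpre', hloop⟩ := isPath_add.1 hpre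
  have hshort := passTime_le (hw := fun a b h => (hw a b h).le) (append_mem_pathWeights hpre'
    (fun t ht => hV t (by omega)) htail (fun t ht => hV _ (by omega)) hB (by simpa using heq.symm))
  have hpos := hloop.pathWeight_pos hw (by omega)
  rw [← hwt, pathWeight_add, pathWeight_add] at hshort
  linarith

lemma IsGeodesic.apply_notMem (hw : ∀ a b, R a b → 0 < w a b) (hp : IsGeodesic R w V B p k)
    (hj : j < k) : p j ∉ B := by
  intro hpj
  obtain ⟨hB, hV, hpath, hwt⟩ := hp
  obtain ⟨l, rfl⟩ := Nat.exists_eq_add_of_le hj.le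
  obtain ⟨hpre, htail⟩ := isPath_add.1 hpath
  have hshort := passTime_le (fun a b h => (hw a b h).le)
    (hpre.self_mem_pathWeights (w := w) (fun t ht => hV t (by omega)) hpj)
  have hpos := htail.pathWeight_pos hw (by omega)
  rw [← hwt, pathWeight_add] at hshort
  linarith

lemma IsGeodesic.restrict (hw : ∀ a b, R a b → 0 ≤ w a b) {V' : Set α} (hVV' : V' ⊆ V)
    (hp : IsGeodesic R w V B p k) (hpV' : ∀ t ≤ k, p t ∈ V') : IsGeodesic R w V' B p k := by
  obtain ⟨hB, hV, hpath, hwt⟩ := hp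
  refine ⟨hB, hpV', hpath, le_antisymm ?_ (passTime_le hw (hpath.self_mem_pathWeights hpV' hB))⟩
  rw [hwt]
  refine csInf_le_csInf (bddBelow_pathWeights hw _) ⟨_, hpath.self_mem_pathWeights hpV' hB⟩ ?_
  rintro _ ⟨k, p, h0, hB, hV, hp, rfl⟩
  exact ⟨k, p, h0, hB, fun t ht => hVV' (hV t ht), hp, rfl⟩

lemma IsPath.pathWeight_congr_weight {w' : α → α → ℝ} (h : ∀ a b, R a b → w a b = w' a b)
    (hp : IsPath R p k) : pathWeight w p k = pathWeight w' p k :=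
  Finset.sum_congr rfl fun t ht => h _ _ (hp t (Finset.mem_range.mp ht))

lemma passTime_congr_weight {w' : α → α → ℝ} (h : ∀ a b, R a b → w a b = w' a b) (u : α) :
    passTime R w V B u = passTime R w' V B u := by
  refine congrArg sInf (Set.ext fun r => ⟨?_, ?_⟩) <;> rintro ⟨k, p, h0, hB, hV, hp, rfl⟩
  exacts [⟨k, p, h0, hB, hV, hp, hp.pathWeight_congr_weight h⟩,
    ⟨k, p, h0, hB, hV, hp, (hp.pathWeight_congr_weight h).symm⟩]

lemma isGeodesic_congr_weight {w' : α → α → ℝ} (h : ∀ a b, R a b → w a b = w' a b) :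
    IsGeodesic R w V B p k ↔ IsGeodesic R w' V B p k := by
  refine and_congr_right fun _ => and_congr_right fun _ => and_congr_right fun hp => ?_
  rw [hp.pathWeight_congr_weight h, passTime_congr_weight h]

section Automorphism

variable (φ : α ≃ α) (hR : ∀ a b, R (φ a) (φ b) ↔ R a b) (hV : ∀ a, φ a ∈ V ↔ a ∈ V)
  (hB : ∀ a, φ a ∈ B ↔ a ∈ B)
include hR hV hB

lemma passTime_comp_equiv (u : α) :
    passTime R (fun a b => w (φ a) (φ b)) V B u = passTime R w V B (φ u) := by
  refine congrArg sInf (Set.ext fun r => ⟨?_, ?_⟩)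
  · rintro ⟨k, p, rfl, hpB, hpV, hp, rfl⟩
    exact ⟨k, φ ∘ p, rfl, (hB _).2 hpB, fun t ht => (hV _).2 (hpV t ht),
      fun t ht => (hR _ _).2 (hp t ht), rfl⟩
  · rintro ⟨k, p, h0, hpB, hpV, hp, rfl⟩
    refine ⟨k, φ.symm ∘ p, by simp [h0], (hB _).1 (by simpa using hpB),
      fun t ht => (hV _).1 (by simpa using hpV t ht),
      fun t ht => (hR _ _).1 (by simpa using hp t ht), by simp [pathWeight]⟩

lemma isGeodesic_comp_equiv :
    IsGeodesic R (fun a b => w (φ a) (φ b)) V B p k ↔ IsGeodesic R w V B (φ ∘ p) k := by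
  simp only [IsGeodesic, Function.comp_apply, hB, hV, IsPath, hR,
    passTime_comp_equiv φ hR hV hB, pathWeight]

end Automorphism

lemma pathWeight_symmWeight_eq_sum [DecidableEq α] {W : Sym2 α → ℝ}
    (hp : ∀ i j, i < j → j ≤ k → p i ≠ p j) :
    pathWeight (symmWeight W) p k =
      ∑ e ∈ (Finset.range k).image fun t => s(p t, p (t + 1)), W e := by
  have hne : ∀ i j, i ≠ j → i ≤ k → j ≤ k → p i ≠ p j := fun i j hij hi hj => by
    rcases hij.lt_or_gt with h | h
    exacts [hp i j h hj, (hp j i h hi).symm]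
  refine (Finset.sum_image fun i hi j hj hij => by_contra fun hij' => ?_).symm
  simp only [Finset.coe_range, Set.mem_Iio] at hi hj
  rcases Sym2.eq_iff.1 hij with ⟨h, -⟩ | ⟨h1, h2⟩
  · exact hne i j hij' (by omega) (by omega) h
  · by_cases hi' : i = j + 1
    · exact hne (i + 1) j (by omega) (by omega) (by omega) h2
    · exact hne i (j + 1) hi' (by omega) (by omega) h1

lemma finite_setOf_isPath (hR : ∀ a, {b | R a b}.Finite) (a₀ : α) (k : ℕ) :
    {b | ∃ p : ℕ → α, p 0 = a₀ ∧ IsPath R p k ∧ p k = b}.Finite := by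
  induction k with
  | zero => exact (Set.finite_singleton a₀).subset fun b ⟨p, h0, _, hb⟩ => hb ▸ h0
  | succ k ih =>
    refine (ih.biUnion fun a _ => hR a).subset fun b ⟨p, h0, hp, hb⟩ => ?_
    exact Set.mem_biUnion ⟨p, h0, fun t ht => hp t (by omega), rfl⟩ (hb ▸ hp k k.lt_succ_self)

lemma exists_subseq_eventually_eq {s : ℕ → Set α} (hs : ∀ t, (s t).Finite) {ρ : ℕ → ℕ → α}
    (hρ : ∀ n t, ρ n t ∈ s t) :
    ∃ (v : ℕ → α) (φ : ℕ → ℕ), StrictMono φ ∧ ∀ m, ∀ᶠ n in atTop, ∀ t ≤ m, ρ (φ n) t = v t := by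
  let _ : TopologicalSpace α := ⊥
  have : DiscreteTopology α := ⟨rfl⟩
  obtain ⟨v, -, φ, hφ, hlim⟩ :=
    (isCompact_univ_pi fun t => (hs t).isCompact).tendsto_subseq (x := ρ) fun n t _ => hρ n t
  refine ⟨v, φ, hφ, fun m => (Set.finite_Iic m).eventually_all.2 fun t _ => ?_⟩
  simpa only [nhds_discrete, tendsto_pure, Function.comp_apply] using tendsto_pi_nhds.1 hlim t

/-- Kőnig's lemma for geodesics into a graph with finite in-degrees. -/
lemma exists_limit_geodesic (hR : ∀ b, {a | R a b}.Finite) (hw : ∀ a b, R a b → 0 ≤ w a b)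
    {V : ℕ → Set α} {a₀ : α} {k : ℕ → ℕ} {γ : ℕ → ℕ → α}
    (hγ : ∀ n, IsGeodesic R w (V n) B (γ n) (k n)) (hγk : ∀ n, γ n (k n) = a₀)
    (hk : ∀ n, n ≤ k n) :
    ∃ v : ℕ → α, v 0 = a₀ ∧ ∀ m N, ∃ n ≥ N, IsGeodesic R w (V n) B (fun t => v (m - t)) m := by
  have hR' : ∀ a, {b | Relation.ReflGen (flip R) a b}.Finite := fun a =>
    ((hR a).insert a).subset fun b hb => by
      rcases hb with _ | hb
      exacts [Set.mem_insert _ _, Set.mem_insert_of_mem _ hb]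
  -- `k n - t` truncates at `0`: past its length the reversed geodesic stays at `γ n 0`
  have hρ : ∀ n t, γ n (k n - t) ∈ {b | ∃ p : ℕ → α, p 0 = a₀ ∧
      IsPath (Relation.ReflGen (flip R)) p t ∧ p t = b} := by
    refine fun n t => ⟨fun t => γ n (k n - t), by simp [hγk], fun s _ => ?_, rfl⟩
    rcases lt_or_ge s (k n) with hs | hs
    · exact .single ((hγ n).isPath.reverse s hs)
    · show Relation.ReflGen _ (γ n (k n - s)) (γ n (k n - (s + 1)))
      rw [Nat.sub_eq_zero_of_le hs, Nat.sub_eq_zero_of_le (by omega)]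
  obtain ⟨v, φ, hφ, hv⟩ := exists_subseq_eventually_eq (finite_setOf_isPath hR' a₀) hρ
  have hagree : ∀ m N, ∃ n ≥ N, m ≤ k n ∧ ∀ t ≤ m, γ n (k n - t) = v t := fun m N => by
    obtain ⟨n, hn, hNm⟩ := ((hv m).and (eventually_ge_atTop (max N m))).exists
    exact ⟨φ n, (le_of_max_le_left hNm).trans (hφ.id_le n),
      (le_of_max_le_right hNm).trans ((hφ.id_le n).trans (hk _)), hn⟩
  obtain ⟨n₀, -, -, hn₀⟩ := hagree 0 0
  refine ⟨v, by simpa [hγk] using (hn₀ 0 le_rfl).symm, fun m N => ?_⟩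
  obtain ⟨n, hnN, hmk, hn⟩ := hagree m N
  have htail := (hγ n).tail hw (Nat.sub_le (k n) m)
  rw [Nat.sub_sub_self hmk] at htail
  refine ⟨n, hnN, htail.congr fun t ht => ?_⟩
  rw [← hn (m - t) (by omega), show k n - (m - t) = k n - m + t by omega]

lemma isGeodesic_univ_of_frequently (hw : ∀ a b, R a b → 0 ≤ w a b) {V : ℕ → Set α}
    (hV : ∀ (q : ℕ → α) (l : ℕ), ∃ N, ∀ n ≥ N, ∀ t ≤ l, q t ∈ V n)
    (hp : ∀ N, ∃ n ≥ N, IsGeodesic R w (V n) B p k) : IsGeodesic R w Set.univ B p k := by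
  obtain ⟨-, -, hB, -, hpath, -⟩ := hp 0
  refine .of_forall_le hw hpath (fun _ _ => trivial) hB ?_
  rintro _ ⟨l, q, hq0, hqB, -, hq, rfl⟩
  obtain ⟨N, hN⟩ := hV q l
  obtain ⟨n, hn, -, -, -, hwt⟩ := hp N
  exact hwt ▸ passTime_le hw ⟨l, q, hq0, hqB, hN n hn, hq, rfl⟩

section Measurability

variable {β : Type*} [MeasurableSpace β] {W : β → α → α → ℝ}

lemma IsPath.measurable_pathWeight (hW : ∀ a b, R a b → Measurable fun c => W c a b)
    (hp : IsPath R p k) : Measurable fun c => pathWeight (W c) p k :=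
  Finset.measurable_sum _ fun t ht => hW _ _ (hp t (Finset.mem_range.mp ht))

-- A path of length `k` only matters through `Fin (k + 1) → α`, a countable type.
def ofFin {k : ℕ} (q : Fin (k + 1) → α) : ℕ → α := fun t => q ⟨min t k, by omega⟩

lemma ofFin_restrict (p : ℕ → α) (k : ℕ) : ∀ t ≤ k, ofFin (fun i : Fin (k + 1) => p i) t = p t :=
  fun t ht => by simp [ofFin, min_eq_left ht]

variable [Countable α]

lemma measurable_passTime (hW : ∀ a b, R a b → Measurable fun c => W c a b) (V B : Set α)
    (u : α) : Measurable fun c => passTime R (W c) V B u := by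
  let I := {i : Σ k, Fin (k + 1) → α // ofFin i.2 0 = u ∧ ofFin i.2 i.1 ∈ B ∧
    (∀ j ≤ i.1, ofFin i.2 j ∈ V) ∧ IsPath R (ofFin i.2) i.1}
  have h : ∀ c, passTime R (W c) V B u = ⨅ i : I, pathWeight (W c) (ofFin i.1.2) i.1.1 := by
    refine fun c => congrArg sInf (Set.ext fun r => ⟨?_, ?_⟩)
    · rintro ⟨k, p, h0, hB, hV, hp, rfl⟩
      have hq := ofFin_restrict p k
      refine ⟨⟨⟨k, fun i => p i⟩, by rwa [hq 0 k.zero_le], by rwa [hq k le_rfl],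
        fun t ht => (hq t ht).symm ▸ hV t ht, hp.congr fun t ht => (hq t ht).symm⟩, ?_⟩
      exact pathWeight_congr hq
    · rintro ⟨⟨⟨k, q⟩, h0, hB, hV, hp⟩, rfl⟩
      exact ⟨k, ofFin q, h0, hB, hV, hp, rfl⟩
  simp_rw [h]
  exact Measurable.iInf fun i => i.2.2.2.2.measurable_pathWeight hW

lemma measurableSet_exists_isGeodesic (hW : ∀ a b, R a b → Measurable fun c => W c a b)
    (V B : Set α) (u z : α) :
    MeasurableSet {c | ∃ (k : ℕ) (p : ℕ → α), p 0 = u ∧ p k = z ∧ IsGeodesic R (W c) V B p k} := by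
  let I := {i : Σ k, Fin (k + 1) → α // ofFin i.2 0 = u ∧ ofFin i.2 i.1 = z ∧
    ofFin i.2 i.1 ∈ B ∧ (∀ j ≤ i.1, ofFin i.2 j ∈ V) ∧ IsPath R (ofFin i.2) i.1}
  have h : {c | ∃ (k : ℕ) (p : ℕ → α), p 0 = u ∧ p k = z ∧ IsGeodesic R (W c) V B p k} =
      ⋃ i : I, {c | pathWeight (W c) (ofFin i.1.2) i.1.1 = passTime R (W c) V B u} := by
    ext c
    simp only [Set.mem_ofPred_eq, Set.mem_iUnion]
    constructor
    · rintro ⟨k, p, rfl, hz, hp⟩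
      have hq := ofFin_restrict p k
      obtain ⟨hB, hV, hpath, hwt⟩ := hp.congr fun t ht => (hq t ht).symm
      exact ⟨⟨⟨k, fun i => p i⟩, hq 0 k.zero_le, by rwa [hq k le_rfl], hB, hV, hpath⟩,
        hwt.trans (by rw [hq 0 k.zero_le])⟩
    · rintro ⟨⟨⟨k, q⟩, h0, hz, hB, hV, hp⟩, hwt⟩
      exact ⟨k, ofFin q, h0, hz, hB, hV, hp, h0 ▸ hwt⟩
  rw [h]
  exact MeasurableSet.iUnion fun i =>
    measurableSet_eq_fun (i.2.2.2.2.2.measurable_pathWeight hW) (measurable_passTime hW V B u)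

end Measurability

end FirstPassage

lemma le_add_of_descent_le_one {f : ℕ → ℕ} {k : ℕ} (hf : ∀ t < k, f t ≤ f (t + 1) + 1) :
    f 0 ≤ f k + k := by
  induction k with
  | zero => simp
  | succ k ih =>
    have := ih fun t ht => hf t (by omega)
    have := hf k k.lt_succ_self
    omega

lemma exists_last_eq_of_descent_le_one {f : ℕ → ℕ} {k n : ℕ}
    (hf : ∀ t < k, f t ≤ f (t + 1) + 1) (h0 : n ≤ f 0) (hk : f k ≤ n) :
    ∃ j ≤ k, f j = n ∧ ∀ t, j ≤ t → t ≤ k → f t ≤ n := by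
  classical
  set j := Nat.findGreatest (fun t => n ≤ f t) k
  have hjk : j ≤ k := Nat.findGreatest_le k
  have hgt : ∀ t, j < t → t ≤ k → f t < n := fun t h1 h2 =>
    not_le.1 (Nat.findGreatest_is_greatest (P := fun t => n ≤ f t) h1 h2)
  have hj : f j = n := by
    refine le_antisymm ?_ (Nat.findGreatest_spec (P := fun t => n ≤ f t) (Nat.zero_le k) h0)
    rcases hjk.lt_or_eq with hlt | heq
    · have := hf j hlt
      have := hgt (j + 1) j.lt_succ_self hlt
      omega
    · exact heq ▸ hk
  refine ⟨j, hjk, hj, fun t h1 h2 => ?_⟩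
  rcases h1.lt_or_eq with hlt | rfl
  exacts [(hgt t hlt h2).le, hj.le]

lemma Set.Infinite.exists_le_snd {β : Type*} {s : Set (β × ℕ)}
    (hfin : ∀ m, {y | (y, m) ∈ s}.Finite) (hs : s.Infinite) (n : ℕ) : ∃ u ∈ s, n ≤ u.2 := by
  by_contra! h
  refine hs (((Set.finite_Iio n).biUnion fun m _ => (hfin m).image (·, m)).subset fun u hu => ?_)
  exact Set.mem_biUnion (h u hu) ⟨u.1, hu, rfl⟩

section Probability

variable {Ω : Type*} [MeasurableSpace Ω] {P : Measure Ω}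

lemma ae_forall_pos_of_map_eq {ι : Type*} [Countable ι] {μ : Measure ℝ} {f : ι → Ω → ℝ}
    (hf : ∀ i, Measurable (f i)) (hdist : ∀ i, P.map (f i) = μ) (hμ : μ (Set.Iic 0) = 0) :
    ∀ᵐ ω ∂P, ∀ i, 0 < f i ω := by
  refine ae_all_iff.2 fun i => ae_iff.2 ?_
  rw [← hdist i, Measure.map_apply (hf i) measurableSet_Iic] at hμ
  simp only [not_lt]
  exact hμ

lemma ProbabilityTheory.iIndepFun.map_comp_eq {ι : Type*} {μ : Measure ℝ} {f : ι → Ω → ℝ}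
    (hf : ∀ i, Measurable (f i)) (hind : iIndepFun f P) (hdist : ∀ i, P.map (f i) = μ)
    {σ : ι → ι} (hσ : σ.Injective) :
    P.map (fun ω i => f (σ i) ω) = P.map (fun ω i => f i ω) := by
  rw [(hind.precomp hσ).map_fun_eq_infinitePi_map fun i => hf (σ i),
    hind.map_fun_eq_infinitePi_map hf]
  simp only [hdist]

variable [IsProbabilityMeasure P]

lemma ProbabilityTheory.IndepFun.measure_eq_eq_zero {X Y : Ω → ℝ} (hX : Measurable X)
    (hY : Measurable Y) (hXY : IndepFun X Y P) (hatom : ∀ a, P.map X {a} = 0) :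
    P {ω | X ω = Y ω} = 0 := by
  have hD : MeasurableSet {z : ℝ × ℝ | z.1 = z.2} :=
    measurableSet_eq_fun measurable_fst measurable_snd
  rw [show {ω | X ω = Y ω} = (fun ω => (X ω, Y ω)) ⁻¹' {z | z.1 = z.2} from rfl,
    ← Measure.map_apply (hX.prodMk hY) hD,
    (indepFun_iff_map_prod_eq_prod_map_map hX.aemeasurable hY.aemeasurable).1 hXY,
    Measure.prod_apply_symm hD]
  simp [hatom]

lemma ProbabilityTheory.iIndepFun.ae_ne_sum {ι : Type*} {f : ι → Ω → ℝ}
    (hf : ∀ i, Measurable (f i)) (hind : iIndepFun f P) (hatom : ∀ i a, P.map (f i) {a} = 0)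
    {T : Finset ι} {i : ι} (hi : i ∉ T) (c : ι → ℝ) :
    ∀ᵐ ω ∂P, f i ω ≠ ∑ j ∈ T, c j * f j ω := by
  classical
  let g : ι → Ω → ℝ := fun j ω => Function.update c i 1 j * f j ω
  have hg : iIndepFun g P := hind.comp _ fun j => measurable_const.mul measurable_id
  have hgm : ∀ j, Measurable (g j) := fun j => (hf j).const_mul _
  have hgi : g i = f i := by ext; simp [g]
  have hT : ∑ j ∈ T, g j = fun ω => ∑ j ∈ T, c j * f j ω := by
    ext ω
    rw [Finset.sum_apply]
    exact Finset.sum_congr rfl fun j hj => by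
      simp [g, Function.update_of_ne (ne_of_mem_of_not_mem hj hi)]
  have hind' := (hg.indepFun_finsetSum_of_notMem hgm hi).symm
  rw [hT, hgi] at hind'
  have := hind'.measure_eq_eq_zero (hf i)
    (Finset.measurable_sum T fun j _ => (hf j).const_mul _) (hatom i)
  exact ae_iff.2 (by simpa using this)

lemma ProbabilityTheory.iIndepFun.ae_sum_ne_sum {ι : Type*} {f : ι → Ω → ℝ}
    (hf : ∀ i, Measurable (f i)) (hind : iIndepFun f P) (hatom : ∀ i a, P.map (f i) {a} = 0)
    {A B : Finset ι} (hAB : A ≠ B) : ∀ᵐ ω ∂P, ∑ j ∈ A, f j ω ≠ ∑ j ∈ B, f j ω := by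
  classical
  wlog h : ∃ i ∈ A, i ∉ B generalizing A B
  · obtain ⟨i, hiB, hiA⟩ : ∃ i ∈ B, i ∉ A := by
      by_contra! h'
      exact hAB (Finset.Subset.antisymm (fun i hi => by_contra fun hiB => h ⟨i, hi, hiB⟩) h')
    filter_upwards [this hAB.symm ⟨i, hiB, hiA⟩] with ω hω using Ne.symm hω
  obtain ⟨i, hiA, hiB⟩ := h
  let c : ι → ℝ := fun j => (if j ∈ B then 1 else 0) - (if j ∈ A then 1 else 0)
  filter_upwards [hind.ae_ne_sum hf hatom (Finset.notMem_erase i (A ∪ B)) c] with ω hω heq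
  have hsum : ∑ j ∈ A ∪ B, c j * f j ω = ∑ j ∈ B, f j ω - ∑ j ∈ A, f j ω := by
    simp only [c, sub_mul, ite_mul, one_mul, zero_mul, Finset.sum_sub_distrib, Finset.sum_ite_mem,
      Finset.union_inter_cancel_right, Finset.union_inter_cancel_left]
  have hsplit := Finset.add_sum_erase (A ∪ B) (fun j => c j * f j ω) (Finset.mem_union_left B hiA)
  simp only [c, hiA, hiB, if_true, if_false] at hsplit
  exact hω (by linarith)

lemma ProbabilityTheory.iIndepFun.ae_sum_injective {ι : Type*} [Countable ι] {f : ι → Ω → ℝ}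
    (hf : ∀ i, Measurable (f i)) (hind : iIndepFun f P) (hatom : ∀ i a, P.map (f i) {a} = 0) :
    ∀ᵐ ω ∂P, ∀ A B : Finset ι, ∑ j ∈ A, f j ω = ∑ j ∈ B, f j ω → A = B := by
  refine ae_all_iff.2 fun A => ae_all_iff.2 fun B => ?_
  by_cases hAB : A = B
  · exact .of_forall fun _ _ => hAB
  · filter_upwards [hind.ae_sum_ne_sum hf hatom hAB] with ω hω h using absurd h hω

end Probability

/-- The mass-transport principle. -/
lemma tsum_eq_tsum_of_mul_left_invariant {G : Type*} [Group G] (F : G → G → ℝ≥0∞)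
    (hF : ∀ g a b, F (g * a) (g * b) = F a b) (a : G) : ∑' b, F a b = ∑' b, F b a := by
  have h1 : ∀ b, F a b = F 1 (a⁻¹ * b) := fun b => by rw [← hF a⁻¹, inv_mul_cancel]
  have h2 : ∀ b, F b a = F 1 (b⁻¹ * a) := fun b => by rw [← hF b⁻¹, inv_mul_cancel]
  rw [tsum_congr h1, tsum_congr h2]
  exact ((Equiv.mulLeft a⁻¹).tsum_eq (F 1)).trans
    (((Equiv.inv G).trans (Equiv.mulRight a)).tsum_eq (F 1)).symm

namespace Eden

open FirstPassage

variable {G : Type*} [Group G] {S : Finset G}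

def base (G : Type*) : Set (G × ℕ) := {v | v.2 = 0}

def slab (G : Type*) (L : ℕ) : Set (G × ℕ) := {v | v.2 ≤ L}

section Undirected

variable {W : Sym2 (G × ℕ) → ℝ} {x : G}

lemma _root_.adjU.snd_le {a b : G × ℕ} (h : adjU S a b) : a.2 ≤ b.2 + 1 := by
  rcases h with ⟨h, -⟩ | ⟨-, h | h⟩ <;> omega

lemma _root_.FirstPassage.IsPath.adjU_snd_le {p : ℕ → G × ℕ} {k : ℕ} (hp : IsPath (adjU S) p k) :
    (p 0).2 ≤ (p k).2 + k :=
  le_add_of_descent_le_one fun t ht => (hp t ht).snd_le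

lemma finite_setOf_adjU (b : G × ℕ) : {a | adjU S a b}.Finite := by
  refine (((S.finite_toSet.image fun s => (b.1 * s⁻¹, b.2))).union
    ((Set.finite_singleton (b.1, b.2 - 1)).insert (b.1, b.2 + 1))).subset ?_
  rintro a (⟨h2, -, hS⟩ | ⟨h1, h2 | h2⟩)
  · exact Or.inl ⟨_, hS, Prod.ext (by simp) h2.symm⟩
  · exact Or.inr (Or.inr (Prod.ext h1 (by simp; omega)))
  · exact Or.inr (Or.inl (Prod.ext h1 (by simp; omega)))

lemma dU_eq_passTime (u : G × ℕ) :
    dU S W u = passTime (adjU S) (symmWeight W) Set.univ (base G) u :=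
  (passTime_univ (R := adjU S) (w := symmWeight W) (B := base G)).symm

lemma mem_TU_iff {u : G × ℕ} : u ∈ TU S W x ↔ ∃ (k : ℕ) (p : ℕ → G × ℕ), p 0 = u ∧
    p k = (x, 0) ∧ IsGeodesic (adjU S) (symmWeight W) Set.univ (base G) p k := by
  have hd := dU_eq_passTime (S := S) (W := W) u
  constructor
  · rintro ⟨k, p, h0, hk, hp, hwt⟩
    exact ⟨k, p, h0, hk, by simp [base, hk], fun _ _ => trivial, hp, by rw [h0, ← hd, ← hwt]; rfl⟩
  · rintro ⟨k, p, h0, hk, -, -, hp, hwt⟩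
    exact ⟨k, p, h0, hk, hp, by rw [hd, ← h0]; exact hwt⟩

lemma mem_TUn_iff {n : ℕ} {y : G} : y ∈ TUn S W n x ↔ ∃ (k : ℕ) (p : ℕ → G × ℕ),
    p 0 = (y, n) ∧ p k = (x, 0) ∧ IsGeodesic (adjU S) (symmWeight W) (slab G n) (base G) p k := by
  constructor
  · rintro ⟨k, p, h0, hk, hV, hp, hwt⟩
    exact ⟨k, p, h0, hk, by simp [base, hk], hV, hp, by rw [h0]; exact hwt⟩
  · rintro ⟨k, p, h0, hk, -, hV, hp, hwt⟩
    exact ⟨k, p, h0, hk, hV, hp, by rw [← h0]; exact hwt⟩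

lemma TUn_nonempty_of_isGeodesic (hW : ∀ a b, adjU S a b → 0 ≤ W s(a, b))
    {V : Set (G × ℕ)} {m k : ℕ} {p : ℕ → G × ℕ} (hV : slab G m ⊆ V)
    (hp : IsGeodesic (adjU S) (symmWeight W) V (base G) p k) (hpk : p k = (x, 0))
    (hm : m ≤ (p 0).2) : (TUn S W m x).Nonempty := by
  obtain ⟨j, hjk, hjm, hle⟩ := exists_last_eq_of_descent_le_one (f := fun t => (p t).2)
    (fun t ht => (hp.isPath t ht).snd_le) hm (by simp [hpk])
  refine ⟨(p j).1, mem_TUn_iff.2 ⟨k - j, fun t => p (j + t), Prod.ext rfl hjm,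
    by simp [show j + (k - j) = k by omega, hpk], ?_⟩⟩
  exact (hp.tail hW hjk).restrict hW hV fun t ht => hle (j + t) (by omega) (by omega)

theorem TUn_nonempty_mono (hW : ∀ a b, adjU S a b → 0 ≤ W s(a, b)) {m n : ℕ}
    (hmn : m ≤ n) (h : (TUn S W n x).Nonempty) : (TUn S W m x).Nonempty := by
  obtain ⟨k, p, h0, hk, hp⟩ := mem_TUn_iff.1 h.some_mem
  exact TUn_nonempty_of_isGeodesic hW (fun v (hv : v.2 ≤ m) => (hv.trans hmn : v.2 ≤ n)) hp hk
    (by simp [h0, hmn])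

theorem TUn_nonempty_of_infinite (hW : ∀ a b, adjU S a b → 0 ≤ W s(a, b))
    (hfin : ∀ m, {y | (y, m) ∈ TU S W x}.Finite) (hinf : (TU S W x).Infinite) (n : ℕ) :
    (TUn S W n x).Nonempty := by
  obtain ⟨u, hu, hn⟩ := hinf.exists_le_snd hfin n
  obtain ⟨k, p, rfl, hk, hp⟩ := mem_TU_iff.1 hu
  exact TUn_nonempty_of_isGeodesic hW (Set.subset_univ _) hp hk hn

theorem TU_infinite_of_TUn_nonempty (hW : ∀ a b, adjU S a b → 0 < W s(a, b))
    (h : ∀ n, (TUn S W (n + 1) x).Nonempty) : (TU S W x).Infinite := by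
  have hW' := fun a b hab => (hW a b hab).le
  choose y hy using h
  choose k γ hγ0 hγk hγ using fun n => mem_TUn_iff.1 (hy n)
  have hk : ∀ n, n ≤ k n := fun n => by
    have := (hγ n).isPath.adjU_snd_le
    simp only [hγ0, hγk] at this
    omega
  obtain ⟨v, hv0, hv⟩ := exists_limit_geodesic (V := fun n => slab G (n + 1)) finite_setOf_adjU
    hW' hγ hγk hk
  have hinj : Function.Injective v := .of_lt_imp_ne fun a b hab => by
    obtain ⟨n, -, hgeo⟩ := hv b 0
    have := hgeo.ne_of_lt hW (Nat.sub_pos_of_lt hab) (Nat.sub_le b a)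
    simp only [Nat.sub_zero, Nat.sub_sub_self hab.le] at this
    exact this.symm
  refine Set.infinite_of_injective_forall_mem hinj fun m => mem_TU_iff.2
    ⟨m, fun t => v (m - t), by simp, by simp [hv0], isGeodesic_univ_of_frequently hW' ?_ (hv m)⟩
  intro q l
  obtain ⟨L, hL⟩ := ((Set.finite_Iic l).image fun t => (q t).2).bddAbove
  exact ⟨L, fun n hn t ht => ((hL ⟨t, ht, rfl⟩).trans hn).trans n.le_succ⟩

theorem TU_infinite_iff (hW : ∀ a b, adjU S a b → 0 < W s(a, b))
    (hfin : ∀ m, {y | (y, m) ∈ TU S W x}.Finite) :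
    (TU S W x).Infinite ↔ ∀ n, 1 ≤ n → (TUn S W n x).Nonempty :=
  ⟨fun hinf n _ => TUn_nonempty_of_infinite (fun a b h => (hW a b h).le) hfin hinf n,
    fun h => TU_infinite_of_TUn_nonempty hW fun n => h (n + 1) n.succ_pos⟩

theorem eq_of_mem_TU_of_mem_TU (hW : ∀ a b, adjU S a b → 0 < W s(a, b))
    (hinj : ∀ A B : Finset {e // IsEdgeU S e}, ∑ e ∈ A, W e.1 = ∑ e ∈ B, W e.1 → A = B)
    {u : G × ℕ} {x y : G} (hx : u ∈ TU S W x) (hy : u ∈ TU S W y) : x = y := by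
  classical
  obtain ⟨k, p, rfl, hpk, hp⟩ := mem_TU_iff.1 hx
  obtain ⟨l, q, hq0, hql, hq⟩ := mem_TU_iff.1 hy
  set Ep := (Finset.range k).image fun t => s(p t, p (t + 1))
  set Eq := (Finset.range l).image fun t => s(q t, q (t + 1))
  have hEp : ∀ e ∈ Ep, IsEdgeU S e := by
    simpa [Ep] using fun t ht => ⟨_, _, rfl, hp.isPath t ht⟩
  have hEq : ∀ e ∈ Eq, IsEdgeU S e := by
    simpa [Eq] using fun t ht => ⟨_, _, rfl, hq.isPath t ht⟩
  -- both geodesics weigh `dU u`, and distinct edge sets have distinct weights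
  have hE : Ep = Eq := by
    have := hinj (Ep.subtype (IsEdgeU S)) (Eq.subtype (IsEdgeU S)) (by
      rw [Finset.sum_subtype_of_mem (f := W) hEp, Finset.sum_subtype_of_mem (f := W) hEq,
        ← pathWeight_symmWeight_eq_sum fun i j hij hj => hp.ne_of_lt hW hij hj,
        ← pathWeight_symmWeight_eq_sum fun i j hij hj => hq.ne_of_lt hW hij hj, hp.2.2.2, hq.2.2.2,
        hq0])
    rw [← Finset.subtype_map_of_mem hEp, ← Finset.subtype_map_of_mem hEq, this]
  -- the endpoint of `p` is a vertex of `q` on the base, hence the endpoint of `q`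
  obtain ⟨j, hjl, hj⟩ : ∃ j ≤ l, q j = p k := by
    rcases Nat.eq_zero_or_pos k with rfl | hk
    · exact ⟨0, l.zero_le, hq0⟩
    · have hlast : s(p (k - 1), p k) ∈ Eq := hE ▸ Finset.mem_image.2
        ⟨k - 1, Finset.mem_range.2 (by omega), by rw [Nat.sub_add_cancel hk]⟩
      obtain ⟨t, ht, he⟩ := Finset.mem_image.1 hlast
      rw [Finset.mem_range] at ht
      rcases Sym2.mem_iff.1 (he ▸ Sym2.mem_mk_right (p (k - 1)) (p k)) with h | h
      exacts [⟨t, by omega, h.symm⟩, ⟨t + 1, by omega, h.symm⟩]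
  obtain rfl : j = l := by_contra fun h => hq.apply_notMem hW (lt_of_le_of_ne hjl h) (hj ▸ hp.1)
  exact (Prod.mk.inj (hpk.symm.trans (hj.symm.trans hql))).1

end Undirected

section Directed

variable {W : (G × ℕ) × (G × ℕ) → ℝ} {x : G}

lemma _root_.FirstPassage.IsPath.adjD_snd_add {p : ℕ → G × ℕ} {k : ℕ} (hp : IsPath (adjD S) p k) :
    ∀ t ≤ k, (p t).2 + t = (p 0).2 := by
  intro t ht
  induction t with
  | zero => rfl
  | succ t ih => have := (hp t ht).1; have := ih (by omega); omega

lemma finite_setOf_adjD (b : G × ℕ) : {a | adjD S a b}.Finite :=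
  ((S.finite_toSet.image fun s => (b.1 * s⁻¹, b.2 + 1))).subset fun a ⟨h2, hS⟩ =>
    ⟨_, hS, Prod.ext (by simp) h2.symm⟩

lemma dD_eq_passTime (u : G × ℕ) :
    dD S W u = passTime (adjD S) (Function.curry W) Set.univ (base G) u :=
  (passTime_univ (R := adjD S) (w := Function.curry W) (B := base G)).symm

lemma mem_TD_iff {u : G × ℕ} : u ∈ TD S W x ↔ ∃ (k : ℕ) (p : ℕ → G × ℕ), p 0 = u ∧
    p k = (x, 0) ∧ IsGeodesic (adjD S) (Function.curry W) Set.univ (base G) p k := by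
  have hd := dD_eq_passTime (S := S) (W := W) u
  constructor
  · rintro ⟨k, p, h0, hk, hp, hwt⟩
    exact ⟨k, p, h0, hk, by simp [base, hk], fun _ _ => trivial, hp, by rw [h0, ← hd, ← hwt]; rfl⟩
  · rintro ⟨k, p, h0, hk, -, -, hp, hwt⟩
    exact ⟨k, p, h0, hk, hp, by rw [hd, ← h0]; exact hwt⟩

lemma TDn_nonempty_of_mem (hW : ∀ a b, adjD S a b → 0 ≤ W (a, b)) {u : G × ℕ}
    (hu : u ∈ TD S W x) {m : ℕ} (hm : m ≤ u.2) : (TDn S W m x).Nonempty := by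
  obtain ⟨k, p, rfl, hk, hp⟩ := mem_TD_iff.1 hu
  have hlev := hp.isPath.adjD_snd_add
  have hku : k = (p 0).2 := by simpa [hk] using hlev k le_rfl
  have hj : (p (k - m)).2 = m := by have := hlev (k - m) (by omega); omega
  have htail := hp.tail hW (Nat.sub_le k m)
  rw [Nat.sub_sub_self (by omega)] at htail
  refine ⟨(p (k - m)).1, mem_TD_iff.2 ⟨m, _, Prod.ext rfl hj, ?_, htail⟩⟩
  simpa [Nat.sub_add_cancel (show m ≤ k by omega)] using hk

lemma finite_TD_level (m : ℕ) : {y | (y, m) ∈ TD S W x}.Finite := by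
  refine ((finite_setOf_isPath (finite_setOf_adjD (S := S)) (x, 0) m).image Prod.fst).subset
    fun y hy => ?_
  obtain ⟨k, p, h0, hk, hp⟩ := mem_TD_iff.1 hy
  have hkm : k = m := by simpa [h0, hk] using hp.isPath.adjD_snd_add k le_rfl
  subst hkm
  exact ⟨p 0, ⟨fun t => p (k - t), by simp [hk], hp.isPath.reverse, by simp⟩, by simp [h0]⟩

theorem TDn_nonempty_mono (hW : ∀ a b, adjD S a b → 0 ≤ W (a, b)) {m n : ℕ}
    (hmn : m ≤ n) (h : (TDn S W n x).Nonempty) : (TDn S W m x).Nonempty :=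
  TDn_nonempty_of_mem hW h.some_mem hmn

theorem TD_infinite_iff (hW : ∀ a b, adjD S a b → 0 ≤ W (a, b)) :
    (TD S W x).Infinite ↔ ∀ n, 1 ≤ n → (TDn S W n x).Nonempty := by
  refine ⟨fun hinf n _ => ?_, fun h => ?_⟩
  · obtain ⟨u, hu, hn⟩ := hinf.exists_le_snd finite_TD_level n
    exact TDn_nonempty_of_mem hW hu hn
  · choose y hy using fun n => h (n + 1) n.succ_pos
    exact Set.infinite_of_injective_forall_mem
      (fun a b hab => Nat.add_right_cancel (congrArg Prod.snd hab)) hy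

end Directed

section Shift

def shift (g : G) : G × ℕ ≃ G × ℕ := (Equiv.mulLeft g).prodCongr (Equiv.refl ℕ)

@[simp] lemma shift_apply (g : G) (u : G × ℕ) : shift g u = (g * u.1, u.2) := rfl

@[simp] lemma shift_symm_apply (g : G) (u : G × ℕ) : (shift g).symm u = (g⁻¹ * u.1, u.2) := rfl

lemma adjU_shift (g : G) (a b : G × ℕ) : adjU S (shift g a) (shift g b) ↔ adjU S a b := by
  simp [adjU, mul_assoc]

lemma _root_.IsEdgeU.map_shift {e : Sym2 (G × ℕ)} (he : IsEdgeU S e) (g : G) :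
    IsEdgeU S (e.map (shift g)) := by
  obtain ⟨a, b, rfl, h⟩ := he
  exact ⟨shift g a, shift g b, Sym2.map_mk _ _ _, (adjU_shift g a b).2 h⟩

lemma TU_congr {W W' : Sym2 (G × ℕ) → ℝ} (h : ∀ a b, adjU S a b → W s(a, b) = W' s(a, b))
    (x : G) : TU S W x = TU S W' x :=
  Set.ext fun _ => by
    simp only [mem_TU_iff, isGeodesic_congr_weight (w := symmWeight W) (w' := symmWeight W') h]

lemma mem_TU_shift (g : G) (W : Sym2 (G × ℕ) → ℝ) (u : G × ℕ) (x : G) :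
    shift g u ∈ TU S W (g * x) ↔ u ∈ TU S (fun e => W (e.map (shift g))) x := by
  have key : ∀ p k, IsGeodesic (adjU S) (symmWeight fun e => W (e.map (shift g))) Set.univ
      (base G) p k ↔ IsGeodesic (adjU S) (symmWeight W) Set.univ (base G) (shift g ∘ p) k :=
    fun p k => isGeodesic_comp_equiv (w := symmWeight W) (shift g) (adjU_shift g)
      (fun _ => Iff.rfl) fun _ => Iff.rfl
  rw [mem_TU_iff, mem_TU_iff]
  constructor
  · rintro ⟨k, p, h0, hk, hp⟩
    refine ⟨k, (shift g).symm ∘ p, by simp [h0], by simp [hk], (key _ k).2 ?_⟩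
    simpa [Function.comp_def] using hp
  · rintro ⟨k, p, rfl, hk, hp⟩
    exact ⟨k, shift g ∘ p, rfl, by simp [hk], (key p k).1 hp⟩

def shiftEdge (g : G) (e : {e // IsEdgeU S e}) : {e // IsEdgeU S e} :=
  ⟨e.1.map (shift g), e.2.map_shift g⟩

lemma shiftEdge_injective (g : G) : (shiftEdge (S := S) g).Injective := fun _ _ h =>
  Subtype.ext (Sym2.map.injective (shift g).injective (congrArg Subtype.val h))

def treeEvent (S : Finset G) (u : G × ℕ) (x : G) : Set ({e // IsEdgeU S e} → ℝ) :=
  {c | u ∈ TU S (Function.extend Subtype.val c 0) x}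

lemma extend_edge (c : {e // IsEdgeU S e} → ℝ) {a b : G × ℕ} (h : adjU S a b) :
    Function.extend Subtype.val c 0 s(a, b) = c ⟨s(a, b), a, b, rfl, h⟩ :=
  Subtype.val_injective.extend_apply c 0 ⟨_, _⟩

lemma measurableSet_treeEvent [Countable G] (u : G × ℕ) (x : G) :
    MeasurableSet (treeEvent S u x) := by
  have hmeas : ∀ a b, adjU S a b →
      Measurable fun c => symmWeight (Function.extend Subtype.val c 0) a b := fun a b h => by
    have : (fun c : {e // IsEdgeU S e} → ℝ => symmWeight (Function.extend Subtype.val c 0) a b) =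
        fun c => c ⟨s(a, b), a, b, rfl, h⟩ := funext fun c => extend_edge c h
    rw [this]
    exact measurable_pi_apply _
  convert measurableSet_exists_isGeodesic hmeas Set.univ (base G) u (x, 0) using 1
  exact Set.ext fun c => mem_TU_iff

lemma treeEvent_shift (g : G) (u : G × ℕ) (x : G) :
    treeEvent S (shift g u) (g * x) = (fun c => c ∘ shiftEdge g) ⁻¹' treeEvent S u x := by
  ext c
  refine (mem_TU_shift g _ u x).trans (Set.ext_iff.1 (TU_congr (fun a b h => ?_) x) u)
  rw [extend_edge _ h]
  exact extend_edge c ((adjU_shift g a b).2 h)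

lemma preimage_treeEvent {Ω : Type*} (WU : Sym2 (G × ℕ) → Ω → ℝ) (u : G × ℕ) (x : G) :
    (fun ω (e : {e // IsEdgeU S e}) => WU e.1 ω) ⁻¹' treeEvent S u x =
      {ω | u ∈ TU S (fun e => WU e ω) x} :=
  Set.ext fun _ => Set.ext_iff.1 (TU_congr (fun _ _ h => extend_edge _ h) x) u

end Shift

section MassTransport

variable [Countable G] {Ω : Type*} [MeasurableSpace Ω]
  {P : Measure Ω} {μ : Measure ℝ} {WU : Sym2 (G × ℕ) → Ω → ℝ}

theorem ae_finite_TU_level (hWU : ∀ e, Measurable (WU e))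
    (hind : iIndepFun (fun e : {e // IsEdgeU S e} => WU e.1) P)
    (hdist : ∀ e : {e // IsEdgeU S e}, P.map (WU e.1) = μ)
    (huniq : ∀ᵐ ω ∂P, ∀ u x y, u ∈ TU S (fun e => WU e ω) x → u ∈ TU S (fun e => WU e ω) y →
      x = y)
    (x : G) (m : ℕ) : ∀ᵐ ω ∂P, {y | (y, m) ∈ TU S (fun e => WU e ω) x}.Finite := by
  have := hind.isProbabilityMeasure
  let X : Ω → {e // IsEdgeU S e} → ℝ := fun ω e => WU e.1 ω
  have hX : Measurable X := measurable_pi_lambda _ fun e => hWU e.1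
  let A : G → G → Set Ω := fun a b => {ω | (b, m) ∈ TU S (fun e => WU e ω) a}
  have hA : ∀ a b, A a b = X ⁻¹' treeEvent S (b, m) a := fun a b =>
    (preimage_treeEvent WU _ _).symm
  have hinv : ∀ g a b, P (A (g * a) (g * b)) = P (A a b) := fun g a b => by
    have hXg : Measurable fun ω => X ω ∘ shiftEdge g := measurable_pi_lambda _ fun e => hWU _
    rw [hA, hA, show ((g * b, m) : G × ℕ) = shift g (b, m) from rfl, treeEvent_shift]
    change P ((fun ω => X ω ∘ shiftEdge g) ⁻¹' treeEvent S (b, m) a) = _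
    rw [← Measure.map_apply hXg (measurableSet_treeEvent _ _),
      ← Measure.map_apply hX (measurableSet_treeEvent _ _)]
    have hlaw : P.map (fun ω => X ω ∘ shiftEdge g) = P.map X :=
      hind.map_comp_eq (fun e => hWU e.1) hdist (shiftEdge_injective g)
    rw [hlaw]
  -- the events `A b x` are a.s. disjoint: a vertex has only one root
  have hbound : ∑' b, P (A b x) ≤ 1 := by
    refine (tsum_meas_le_meas_iUnion_of_disjoint₀ P
      (fun b => (hA b x ▸ hX (measurableSet_treeEvent _ _)).nullMeasurableSet)
      fun b b' hbb' => ?_).trans prob_le_one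
    refine measure_mono_null ?_ (ae_iff.1 huniq)
    exact fun ω ⟨hb, hb'⟩ h => hbb' (h _ _ _ hb hb')
  have hsum : ∑' b, P (A x b) ≠ ⊤ := by
    rw [tsum_eq_tsum_of_mul_left_invariant (fun a b => P (A a b)) hinv]
    exact (hbound.trans_lt ENNReal.one_lt_top).ne
  exact ae_finite_setOfPred_mem hsum

theorem ae_eq_of_mem_TU_of_mem_TU (hWU : ∀ e, Measurable (WU e))
    (hind : iIndepFun (fun e : {e // IsEdgeU S e} => WU e.1) P)
    (hdist : ∀ e : {e // IsEdgeU S e}, P.map (WU e.1) = μ) (hatom : ∀ a, μ {a} = 0)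
    (hpos : ∀ᵐ ω ∂P, ∀ a b, adjU S a b → 0 < WU s(a, b) ω) :
    ∀ᵐ ω ∂P, ∀ u x y, u ∈ TU S (fun e => WU e ω) x → u ∈ TU S (fun e => WU e ω) y → x = y := by
  have := hind.isProbabilityMeasure
  filter_upwards [hpos, hind.ae_sum_injective (fun e => hWU e.1)
    fun e a => (hdist e).symm ▸ hatom a] with ω hpos hinj
  exact fun u x y => eq_of_mem_TU_of_mem_TU hpos hinj

end MassTransport

end Eden

theorem stationary_eden_tree_levels_general
    {G : Type*} [Group G] [Countable G] (S : Finset G)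
    {Ω : Type*} [MeasureSpace Ω]
    (μ : Measure ℝ)
    (hatom : ∀ a : ℝ, μ {a} = 0) (hsupp : μ (Set.Iio 0) = 0)
    (WD : (G × ℕ) × (G × ℕ) → Ω → ℝ) (hWDmeas : ∀ e, Measurable (WD e))
    (hWDdist : ∀ e : {e : (G × ℕ) × (G × ℕ) // adjD S e.1 e.2},
      Measure.map (WD e.val) ℙ = μ)
    (WU : Sym2 (G × ℕ) → Ω → ℝ) (hWUmeas : ∀ e, Measurable (WU e))
    (hWUindep : iIndepFun
      (fun e : {e : Sym2 (G × ℕ) // IsEdgeU S e} => WU e.val) ℙ)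
    (hWUdist : ∀ e : {e : Sym2 (G × ℕ) // IsEdgeU S e},
      Measure.map (WU e.val) ℙ = μ)
    (x : G) :
    (∀ᵐ ω ∂ℙ,
      (∀ n m : ℕ, 1 ≤ m → m ≤ n →
        (TDn S (fun e => WD e ω) n x).Nonempty →
        (TDn S (fun e => WD e ω) m x).Nonempty) ∧
      ((TD S (fun e => WD e ω) x).Infinite ↔
        ∀ n : ℕ, 1 ≤ n → (TDn S (fun e => WD e ω) n x).Nonempty)) ∧
    (∀ᵐ ω ∂ℙ,
      (∀ n m : ℕ, 1 ≤ m → m ≤ n →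
        (TUn S (fun e => WU e ω) n x).Nonempty →
        (TUn S (fun e => WU e ω) m x).Nonempty) ∧
      ((TU S (fun e => WU e ω) x).Infinite ↔
        ∀ n : ℕ, 1 ≤ n → (TUn S (fun e => WU e ω) n x).Nonempty)) := by
  have hμ : μ (Set.Iic 0) = 0 := by
    rw [← Set.Iio_union_right]
    exact measure_union_null hsupp (hatom 0)
  constructor
  · filter_upwards [ae_forall_pos_of_map_eq (fun e : {e // adjD S e.1 e.2} => hWDmeas e.1)
      hWDdist hμ] with ω hpos
    have hW : ∀ a b, adjD S a b → 0 ≤ WD (a, b) ω :=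
      fun a b h => (hpos ⟨(a, b), h⟩).le
    exact ⟨fun n m _ hmn => Eden.TDn_nonempty_mono hW hmn, Eden.TD_infinite_iff hW⟩
  · have hpos : ∀ᵐ ω ∂ℙ, ∀ a b, adjU S a b → 0 < WU s(a, b) ω := by
      filter_upwards [ae_forall_pos_of_map_eq (fun e : {e // IsEdgeU S e} => hWUmeas e.1) hWUdist
        hμ] with ω hpos
      exact fun a b h => hpos ⟨s(a, b), a, b, rfl, h⟩
    have huniq := Eden.ae_eq_of_mem_TU_of_mem_TU hWUmeas hWUindep hWUdist hatom hpos
    filter_upwards [hpos, ae_all_iff.2 (Eden.ae_finite_TU_level hWUmeas hWUindep hWUdist huniq x)]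
      with ω hW hfin
    exact ⟨fun n m _ hmn => Eden.TUn_nonempty_mono (fun a b h => (hW a b h).le) hmn,
      Eden.TU_infinite_iff hW hfin⟩

/-- Lemma 2.5 of "Stationary Eden Model on groups": in both the directed and
the undirected model, almost surely, if the `n`-th level set `Tⁿ(x)` is
nonempty then `Tᵐ(x)` is nonempty for all `1 ≤ m ≤ n`; moreover, almost surely
the tree `T(x)` is infinite if and only if `Tⁿ(x) ≠ ∅` for all `n ≥ 1`. -/
theorem stationary_eden_tree_levels
    {G : Type*} [Group G] [Countable G] (S : Finset G)
    (hSsym : ∀ s ∈ S, s⁻¹ ∈ S) (hS1 : (1 : G) ∉ S)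
    (hSgen : Subgroup.closure (S : Set G) = ⊤)
    {Ω : Type*} [MeasureSpace Ω] [IsProbabilityMeasure (ℙ : Measure Ω)]
    (μ : Measure ℝ) [IsProbabilityMeasure μ]
    (hatom : ∀ a : ℝ, μ {a} = 0) (hsupp : μ (Set.Iio 0) = 0)
    (hmean : Integrable id μ)
    (WD : (G × ℕ) × (G × ℕ) → Ω → ℝ) (hWDmeas : ∀ e, Measurable (WD e))
    (hWDindep : iIndepFun
      (fun e : {e : (G × ℕ) × (G × ℕ) // adjD S e.1 e.2} => WD e.val) ℙ)
    (hWDdist : ∀ e : {e : (G × ℕ) × (G × ℕ) // adjD S e.1 e.2},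
      Measure.map (WD e.val) ℙ = μ)
    (WU : Sym2 (G × ℕ) → Ω → ℝ) (hWUmeas : ∀ e, Measurable (WU e))
    (hWUindep : iIndepFun
      (fun e : {e : Sym2 (G × ℕ) // IsEdgeU S e} => WU e.val) ℙ)
    (hWUdist : ∀ e : {e : Sym2 (G × ℕ) // IsEdgeU S e},
      Measure.map (WU e.val) ℙ = μ)
    (x : G) :
    (∀ᵐ ω ∂ℙ,
      (∀ n m : ℕ, 1 ≤ m → m ≤ n →
        (TDn S (fun e => WD e ω) n x).Nonempty →
        (TDn S (fun e => WD e ω) m x).Nonempty) ∧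
      ((TD S (fun e => WD e ω) x).Infinite ↔
        ∀ n : ℕ, 1 ≤ n → (TDn S (fun e => WD e ω) n x).Nonempty)) ∧
    (∀ᵐ ω ∂ℙ,
      (∀ n m : ℕ, 1 ≤ m → m ≤ n →
        (TUn S (fun e => WU e ω) n x).Nonempty →
        (TUn S (fun e => WU e ω) m x).Nonempty) ∧
      ((TU S (fun e => WU e ω) x).Infinite ↔
        ∀ n : ℕ, 1 ≤ n → (TUn S (fun e => WU e ω) n x).Nonempty)) :=
  stationary_eden_tree_levels_general S μ hatom hsupp WD hWDmeas hWDdist WU hWUmeas hWUindep hWUdist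
    x
end
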